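/- arXiv:2306.13494 — 7 statements merged into one kernel-verified Lean document; each statement's English description precedes it below -/
import Mathlib

section
/- Under the substitution (u,v) = φ(s,t) := (st, s²t(1−t)), the map φ satisfies φ([0,1]×[0,1]) ⊆ Δ ⊆ φ([0,2]×[0,1]), where Δ = {(u,v) : 0 ≤ v ≤ u ≤ 1}, and the Jacobian determinant of φ is s²t. -/
open Set

def triangleChart (q : ℝ × ℝ) : ℝ × ℝ := (q.1 * q.2, q.1 ^ 2 * q.2 * (1 - q.2))

lemma mapsTo_triangleChart_unitSquare :
    MapsTo triangleChart (Icc 0 1 ×ˢ Icc 0 1) {q : ℝ × ℝ | 0 ≤ q.2 ∧ q.2 ≤ q.1 ∧ q.1 ≤ 1} := by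
  rintro ⟨s, t⟩ ⟨⟨hs0, hs1⟩, ht0, ht1⟩
  refine ⟨by simp only [triangleChart]; bound, ?_, ?_⟩
  · calc s ^ 2 * t * (1 - t) = s * t * (s * (1 - t)) := by ring
      _ ≤ s * t * 1 := by gcongr; nlinarith
      _ = s * t := mul_one _
  · calc s * t ≤ 1 * 1 := by gcongr
      _ = 1 := one_mul 1

/-- From `st = u` one gets `s²t(1 - t) = su - u²`, so `v = su - u²` determines `s`. -/
lemma triangleChart_preimage_point {u v : ℝ} (hu : u ≠ 0) (huv : u ^ 2 + v ≠ 0) :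
    triangleChart ((u ^ 2 + v) / u, u ^ 2 / (u ^ 2 + v)) = (u, v) := by
  simp only [triangleChart, Prod.mk.injEq]
  constructor <;> field_simp; ring

lemma triangle_subset_image_triangleChart :
    {q : ℝ × ℝ | 0 ≤ q.2 ∧ q.2 ≤ q.1 ∧ q.1 ≤ 1} ⊆ triangleChart '' (Icc 0 2 ×ˢ Icc 0 1) := by
  rintro ⟨u, v⟩ ⟨hv0, hvu, hu1⟩
  rcases (hv0.trans hvu).eq_or_lt with rfl | hu
  · obtain rfl : v = 0 := le_antisymm hvu hv0
    exact ⟨(0, 0), ⟨⟨le_rfl, zero_le_two⟩, le_rfl, zero_le_one⟩, by simp [triangleChart]⟩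
  · have huv : 0 < u ^ 2 + v := by positivity
    refine ⟨_, ⟨⟨by positivity, ?_⟩, by positivity, ?_⟩, triangleChart_preimage_point hu.ne' huv.ne'⟩
    · rw [div_le_iff₀ hu]; nlinarith
    · rw [div_le_one huv]; linarith

lemma fderiv_triangleChart_apply (q w : ℝ × ℝ) :
    fderiv ℝ triangleChart q w =
      (q.2 * w.1 + q.1 * w.2,
        2 * q.1 * q.2 * (1 - q.2) * w.1 + q.1 ^ 2 * (1 - 2 * q.2) * w.2) := by
  have hfst := hasFDerivAt_fst (𝕜 := ℝ) (E := ℝ) (F := ℝ) (p := q)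
  have hsnd := hasFDerivAt_snd (𝕜 := ℝ) (E := ℝ) (F := ℝ) (p := q)
  have h : HasFDerivAt triangleChart _ q := (hfst.mul hsnd).prodMk
    (((hfst.pow 2).mul hsnd).mul ((hasFDerivAt_const (1 : ℝ) q).sub hsnd))
  rw [h.fderiv]
  simp only [Pi.mul_apply, zero_sub, smul_neg, Nat.add_one_sub_one, pow_one, nsmul_eq_mul,
    Nat.cast_ofNat, smul_add, ContinuousLinearMap.prod_apply, add_apply,
    smul_apply, ContinuousLinearMap.coe_snd', smul_eq_mul,
    ContinuousLinearMap.coe_fst', neg_apply, Prod.mk.injEq]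
  constructor <;> ring

lemma jacobian_triangleChart (q : ℝ × ℝ) :
    (fderiv ℝ triangleChart q (1, 0)).1 * (fderiv ℝ triangleChart q (0, 1)).2 -
      (fderiv ℝ triangleChart q (1, 0)).2 * (fderiv ℝ triangleChart q (0, 1)).1 =
      -(q.1 ^ 2 * q.2) := by
  simp only [fderiv_triangleChart_apply]
  ring

/-- For `φ(s,t) := (st, s²t(1−t))` one has
`φ([0,1]×[0,1]) ⊆ Δ ⊆ φ([0,2]×[0,1])` with `Δ = {(u,v) : 0 ≤ v ≤ u ≤ 1}`,
and the Jacobian determinant of `φ` has absolute value `s²t`. -/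
theorem stmt3
    (φ : ℝ × ℝ → ℝ × ℝ)
    (hφ : ∀ q : ℝ × ℝ, φ q = (q.1 * q.2, q.1 ^ 2 * q.2 * (1 - q.2)))
    (Δ : Set (ℝ × ℝ))
    (hΔ : Δ = {q : ℝ × ℝ | 0 ≤ q.2 ∧ q.2 ≤ q.1 ∧ q.1 ≤ 1}) :
    φ '' (Icc (0:ℝ) 1 ×ˢ Icc (0:ℝ) 1) ⊆ Δ ∧
    Δ ⊆ φ '' (Icc (0:ℝ) 2 ×ˢ Icc (0:ℝ) 1) ∧
    ∀ q : ℝ × ℝ, 0 ≤ q.1 → 0 ≤ q.2 →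
      |(fderiv ℝ φ q (1, 0)).1 * (fderiv ℝ φ q (0, 1)).2 -
        (fderiv ℝ φ q (1, 0)).2 * (fderiv ℝ φ q (0, 1)).1| = q.1 ^ 2 * q.2 := by
  obtain rfl : φ = triangleChart := funext hφ
  subst hΔ
  refine ⟨mapsTo_triangleChart_unitSquare.image_subset, triangle_subset_image_triangleChart,
    fun q _ ht => ?_⟩
  rw [jacobian_triangleChart, abs_neg, abs_of_nonneg (by positivity)]
end

section
/- For real a, b, c and p ≥ 1, the integral ∫_Δ |a u³v² + b u⁵v + c u⁷|^p / (uv + u³)^{(8/3)p} du dv over Δ = {(u,v) : 0 ≤ v ≤ u ≤ 1} with p = 3 is finite only if a = b = c = 0. -/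
/-!
The integrand is homogeneous under `v = s u²`: it equals `|P s|³ / ((1 + s)⁸ u³)` with
`P s = a s² + b s + c`. If `P` does not vanish on `(0, 1)`, it stays above some `ε > 0` on an
interval `[α, β]`, so on the parabolic strip `α u² < v < β u²` the integrand is at least a multiple
of `u⁻³`; the strip has `v`-width `(β - α) u²`, which leaves the divergent `∫₀¹ du / u`.
A quadratic vanishing on `(0, 1)` is zero.
-/

open MeasureTheory Set Filter Topology

lemma lintegral_Ioc_const_mul_inv_eq_top {C : ℝ} (hC : 0 < C) :
    ∫⁻ u in Ioc (0 : ℝ) 1, ENNReal.ofReal (C * u⁻¹) = ⊤ := by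
  by_contra hfin
  have hint : IntegrableOn (fun u : ℝ => C * u⁻¹) (Ioc 0 1) := by
    refine (lintegral_ofReal_ne_top_iff_integrable (by fun_prop) ?_).mp hfin
    filter_upwards [ae_restrict_mem measurableSet_Ioc] with u hu
    have hu₀ := hu.1
    positivity
  have hinv : IntegrableOn (fun u : ℝ => u ^ (-1 : ℝ)) (Ioo 0 1) := by
    simpa [Real.rpow_neg_one, ← mul_assoc, hC.ne'] using
      IntegrableOn.mono_set (hint.const_mul C⁻¹) Ioo_subset_Ioc_self
  exact lt_irrefl _ ((intervalIntegral.integrableOn_Ioo_rpow_iff one_pos).mp hinv)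

lemma setLIntegral_regionBetween_comp_fst {α : Type*} [MeasurableSpace α] {μ : Measure α}
    [SFinite μ] {f g : α → ℝ} {s : Set α} (hf : Measurable f) (hg : Measurable g)
    (hs : MeasurableSet s) {w : α → ENNReal} (hw : Measurable w) :
    ∫⁻ z in regionBetween f g s, w z.1 ∂μ.prod volume =
      ∫⁻ x in s, w x * ENNReal.ofReal ((g - f) x) ∂μ := by
  rw [← withDensity_apply _ (measurableSet_regionBetween hf hg hs), ← prod_withDensity_left hw,
    volume_regionBetween_eq_lintegral' hf hg hs,
    setLIntegral_withDensity_eq_setLIntegral_mul _ hw (by fun_prop) hs]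
  rfl

lemma setLIntegral_regionBetween_sq_eq_top {α β K : ℝ} (hαβ : α < β) (hK : 0 < K) :
    ∫⁻ q in regionBetween (fun u => α * u ^ 2) (fun u => β * u ^ 2) (Ioc 0 1),
      ENNReal.ofReal (K * (q.1 ^ 3)⁻¹) = ⊤ := by
  rw [Measure.volume_eq_prod, setLIntegral_regionBetween_comp_fst (by fun_prop) (by fun_prop)
    measurableSet_Ioc (w := fun u => ENNReal.ofReal (K * (u ^ 3)⁻¹)) (by fun_prop),
    ← lintegral_Ioc_const_mul_inv_eq_top (C := K * (β - α)) (mul_pos hK (sub_pos.2 hαβ))]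
  refine setLIntegral_congr_fun measurableSet_Ioc fun u hu => ?_
  have hu₀ := hu.1
  rw [Pi.sub_apply, ← ENNReal.ofReal_mul (by positivity)]
  congr 1
  field_simp

lemma ContinuousAt.exists_Icc_subset_le_abs {f : ℝ → ℝ} {t : ℝ} (hf : ContinuousAt f t)
    (ht : f t ≠ 0) {U : Set ℝ} (hU : U ∈ 𝓝 t) :
    ∃ α β, α < β ∧ Icc α β ⊆ U ∧ ∃ ε > 0, ∀ x ∈ Icc α β, ε ≤ |f x| := by
  have hpos : 0 < |f t| := abs_pos.2 ht
  obtain ⟨r, hr, hball⟩ := Metric.mem_nhds_iff.mp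
    ((hf.abs.eventually (lt_mem_nhds (half_lt_self hpos))).and hU)
  have hIcc : Icc (t - r / 2) (t + r / 2) ⊆ Metric.ball t r := by
    rw [← Real.closedBall_eq_Icc]
    exact Metric.closedBall_subset_ball (half_lt_self hr)
  exact ⟨t - r / 2, t + r / 2, by linarith, fun x hx => (hball (hIcc hx)).2,
    |f t| / 2, half_pos hpos, fun x hx => (hball (hIcc hx)).1.le⟩

lemma quadratic_eq_zero_of_forall_Ioo {a b c : ℝ}
    (h : ∀ s ∈ Ioo (0 : ℝ) 1, a * s ^ 2 + b * s + c = 0) : a = 0 ∧ b = 0 ∧ c = 0 := by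
  have h₁ := h (1 / 4) (by norm_num)
  have h₂ := h (1 / 2) (by norm_num)
  have h₃ := h (3 / 4) (by norm_num)
  exact ⟨by linarith, by linarith, by linarith⟩

lemma integrand_eq_of_pos {a b c u v : ℝ} (hu : 0 < u) :
    |a * u ^ 3 * v ^ 2 + b * u ^ 5 * v + c * u ^ 7| ^ 3 / (u * v + u ^ 3) ^ 8 =
      |a * (v / u ^ 2) ^ 2 + b * (v / u ^ 2) + c| ^ 3 / ((1 + v / u ^ 2) ^ 8 * u ^ 3) := by
  have hfactor : a * u ^ 3 * v ^ 2 + b * u ^ 5 * v + c * u ^ 7 =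
      u ^ 7 * (a * (v / u ^ 2) ^ 2 + b * (v / u ^ 2) + c) := by
    field_simp
  rw [hfactor, abs_mul, abs_of_pos (by positivity), mul_pow]
  field_simp
  ring

lemma le_integrand {a b c u v ε : ℝ} (hu : 0 < u) (hv₀ : 0 ≤ v) (hv₁ : v ≤ u ^ 2) (hε₀ : 0 ≤ ε)
    (hε : ε ≤ |a * (v / u ^ 2) ^ 2 + b * (v / u ^ 2) + c|) :
    ε ^ 3 / 256 * (u ^ 3)⁻¹ ≤
      |a * u ^ 3 * v ^ 2 + b * u ^ 5 * v + c * u ^ 7| ^ 3 / (u * v + u ^ 3) ^ 8 := by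
  have hs₀ : 0 ≤ v / u ^ 2 := by positivity
  have hs₁ : v / u ^ 2 ≤ 1 := div_le_one_of_le₀ hv₁ (by positivity)
  rw [integrand_eq_of_pos hu, div_mul_eq_div_div, ← div_eq_mul_inv]
  gcongr
  calc (1 + v / u ^ 2) ^ 8 ≤ 2 ^ 8 := by gcongr; linarith
    _ = 256 := by norm_num

lemma regionBetween_sq_subset_triangle {α β : ℝ} (hα : 0 ≤ α) (hβ : β ≤ 1) :
    regionBetween (fun u => α * u ^ 2) (fun u => β * u ^ 2) (Ioc 0 1) ⊆
      {q : ℝ × ℝ | 0 ≤ q.2 ∧ q.2 ≤ q.1 ∧ q.1 ≤ 1} := by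
  rintro ⟨u, v⟩ ⟨⟨hu₀, hu₁⟩, hv₀, hv₁⟩
  dsimp only at hu₀ hu₁ hv₀ hv₁
  exact ⟨by nlinarith, by nlinarith, hu₁⟩

/-- For `p = 3`, finiteness of
`∫_Δ |a u³v² + b u⁵v + c u⁷|³ / (uv + u³)⁸` over the triangle
`Δ = {(u,v) : 0 ≤ v ≤ u ≤ 1}` forces `a = b = c = 0`. -/
theorem stmt4 (a b c : ℝ)
    (h : (∫⁻ q in {q : ℝ × ℝ | 0 ≤ q.2 ∧ q.2 ≤ q.1 ∧ q.1 ≤ 1},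
        ENNReal.ofReal (|a * q.1 ^ 3 * q.2 ^ 2 + b * q.1 ^ 5 * q.2 + c * q.1 ^ 7| ^ 3 /
          (q.1 * q.2 + q.1 ^ 3) ^ 8)) < ⊤) :
    a = 0 ∧ b = 0 ∧ c = 0 := by
  by_contra hne
  obtain ⟨t, ht, hPt⟩ : ∃ t ∈ Ioo (0 : ℝ) 1, a * t ^ 2 + b * t + c ≠ 0 := by
    by_contra! hzero
    exact hne (quadratic_eq_zero_of_forall_Ioo hzero)
  obtain ⟨α, β, hαβ, hsub, ε, hε, hP⟩ :=
    (show ContinuousAt (fun s => a * s ^ 2 + b * s + c) t by fun_prop).exists_Icc_subset_le_abs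
      hPt (Ioo_mem_nhds ht.1 ht.2)
  have hα : 0 < α := (hsub ⟨le_rfl, hαβ.le⟩).1
  have hβ : β < 1 := (hsub ⟨hαβ.le, le_rfl⟩).2
  set S := regionBetween (fun u => α * u ^ 2) (fun u => β * u ^ 2) (Ioc 0 1)
  have hbound : ∀ q ∈ S, ENNReal.ofReal (ε ^ 3 / 256 * (q.1 ^ 3)⁻¹) ≤
      ENNReal.ofReal (|a * q.1 ^ 3 * q.2 ^ 2 + b * q.1 ^ 5 * q.2 + c * q.1 ^ 7| ^ 3 /
        (q.1 * q.2 + q.1 ^ 3) ^ 8) := by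
    rintro ⟨u, v⟩ ⟨⟨hu₀, -⟩, hv₀, hv₁⟩
    dsimp only at hu₀ hv₀ hv₁ ⊢
    have hu₂ : 0 < u ^ 2 := by positivity
    exact ENNReal.ofReal_le_ofReal (le_integrand hu₀ (by nlinarith) (by nlinarith) hε.le
      (hP _ ⟨(le_div_iff₀ hu₂).2 hv₀.le, (div_le_iff₀ hu₂).2 hv₁.le⟩))
  refine lt_irrefl ⊤ (lt_of_le_of_lt ?_ h)
  calc ⊤ = ∫⁻ q in S, ENNReal.ofReal (ε ^ 3 / 256 * (q.1 ^ 3)⁻¹) :=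
        (setLIntegral_regionBetween_sq_eq_top hαβ (by positivity)).symm
    _ ≤ _ := setLIntegral_mono' (measurableSet_regionBetween (by fun_prop) (by fun_prop)
        measurableSet_Ioc) hbound
    _ ≤ _ := lintegral_mono_set (regionBetween_sq_subset_triangle hα.le hβ.le)
end

section
/- Via the substitution (u,v) = (st, s²t(1−t)), one has ∫_Δ |a u³v² + b u⁵v + c u⁷|³/(uv+u³)⁸ du dv ≥ (∫₀¹ s⁻¹ ds) · (∫₀¹ |a + (b−2a)t + (a−b+c)t²|³ dt), where the first factor is +∞; hence finiteness of the left side forces the quadratic polynomial a + (b−2a)t + (a−b+c)t² to vanish identically, i.e. a = b = c = 0. -/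
/-! The substitution `(u, v) = (s t, s² t (1 - t))` maps `(0,1)²` injectively into `Δ` with
Jacobian `s² t`. Since `a u³v² + b u⁵v + c u⁷ = s⁷ t⁵ P(t)` with
`P(t) = a + (b - 2a) t + (a - b + c) t²` and `u v + u³ = s³ t²`, the integrand pulls back to
`s⁻¹ |P(t)|³`, so the integral over `Δ` dominates `∫ s⁻¹ ds · ∫ |P|³ dt`, whose first factor
diverges. Finiteness therefore forces `∫ |P|³ = 0`; the continuous `P` then vanishes on `(0,1)`,
and a quadratic vanishing at three points is zero. -/

open MeasureTheory Set

theorem lintegral_Ioo_zero_inv_eq_top {r : ℝ} (hr : 0 < r) :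
    ∫⁻ s in Ioo 0 r, ENNReal.ofReal s⁻¹ = ⊤ := by
  by_contra h
  have hint : IntegrableOn (fun s : ℝ ↦ s⁻¹) (Ioo 0 r) := by
    refine (lintegral_ofReal_ne_top_iff_integrable measurable_inv.aestronglyMeasurable ?_).1 h
    filter_upwards [ae_restrict_mem measurableSet_Ioo] with s hs
    exact inv_nonneg.2 hs.1.le
  rw [← intervalIntegrable_iff_integrableOn_Ioo_of_le hr.le] at hint
  simp [intervalIntegrable_inv_iff, hr.ne] at hint

theorem eqOn_zero_of_setLIntegral_ofReal_abs_pow_eq_zero {X : Type*} [TopologicalSpace X]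
    [MeasurableSpace X] [OpensMeasurableSpace X] {μ : Measure X} [μ.IsOpenPosMeasure]
    {f : X → ℝ} {U : Set X} (hU : IsOpen U) (hf : ContinuousOn f U) {n : ℕ} (hn : n ≠ 0)
    (h : ∫⁻ x in U, ENNReal.ofReal (|f x| ^ n) ∂μ = 0) : EqOn f 0 U := by
  have hcont : ContinuousOn (fun x ↦ ENNReal.ofReal (|f x| ^ n)) U :=
    ENNReal.continuous_ofReal.comp_continuousOn (hf.abs.pow n)
  have hae := (lintegral_eq_zero_iff' (hcont.aemeasurable hU.measurableSet)).1 h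
  intro x hx
  have hx0 : ENNReal.ofReal (|f x| ^ n) = 0 :=
    μ.eqOn_open_of_ae_eq hae hU hcont continuousOn_const hx
  rw [ENNReal.ofReal_eq_zero] at hx0
  simpa [hn] using le_antisymm hx0 (by positivity)

theorem quadratic_coeffs_eq_zero_of_eqOn_Ioo {p q r : ℝ}
    (h : EqOn (fun t ↦ p + q * t + r * t ^ 2) 0 (Ioo 0 1)) : p = 0 ∧ q = 0 ∧ r = 0 := by
  have h1 := h (show (1 / 4 : ℝ) ∈ Ioo 0 1 by norm_num)
  have h2 := h (show (1 / 2 : ℝ) ∈ Ioo 0 1 by norm_num)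
  have h3 := h (show (3 / 4 : ℝ) ∈ Ioo 0 1 by norm_num)
  simp only [Pi.zero_apply] at h1 h2 h3
  refine ⟨?_, ?_, ?_⟩ <;> linarith

section Entries

variable {𝕜 : Type*} [Field 𝕜] [TopologicalSpace 𝕜] [IsTopologicalRing 𝕜]

def clmOfEntries (A B C D : 𝕜) : 𝕜 × 𝕜 →L[𝕜] 𝕜 × 𝕜 :=
  (A • ContinuousLinearMap.fst 𝕜 𝕜 𝕜 + B • ContinuousLinearMap.snd 𝕜 𝕜 𝕜).prod
    (C • ContinuousLinearMap.fst 𝕜 𝕜 𝕜 + D • ContinuousLinearMap.snd 𝕜 𝕜 𝕜)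

@[simp]
theorem clmOfEntries_apply (A B C D : 𝕜) (v : 𝕜 × 𝕜) :
    clmOfEntries A B C D v = (A * v.1 + B * v.2, C * v.1 + D * v.2) := by
  simp [clmOfEntries]

theorem det_clmOfEntries (A B C D : 𝕜) : (clmOfEntries A B C D).det = A * D - B * C := by
  have : (clmOfEntries A B C D : 𝕜 × 𝕜 →ₗ[𝕜] 𝕜 × 𝕜) =
      Matrix.toLin (Module.Basis.finTwoProd 𝕜) (Module.Basis.finTwoProd 𝕜) !![A, B; C, D] := by
    refine (Module.Basis.finTwoProd 𝕜).ext fun i ↦ ?_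
    fin_cases i <;> simp [Matrix.toLin_apply, Fin.sum_univ_two]
  rw [ContinuousLinearMap.det, this, LinearMap.det_toLin, Matrix.det_fin_two_of]

end Entries

def deltaSubst (q : ℝ × ℝ) : ℝ × ℝ := (q.1 * q.2, q.1 ^ 2 * q.2 * (1 - q.2))

noncomputable def fderivDeltaSubst (p : ℝ × ℝ) : ℝ × ℝ →L[ℝ] ℝ × ℝ :=
  clmOfEntries p.2 p.1 (2 * p.1 * p.2 * (1 - p.2)) (p.1 ^ 2 * (1 - 2 * p.2))

theorem hasFDerivAt_deltaSubst (p : ℝ × ℝ) :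
    HasFDerivAt deltaSubst (fderivDeltaSubst p) p := by
  have hfst : HasFDerivAt (𝕜 := ℝ) Prod.fst _ p := hasFDerivAt_fst
  have hsnd : HasFDerivAt (𝕜 := ℝ) Prod.snd _ p := hasFDerivAt_snd
  have h1 := hfst.mul hsnd
  have h2 := ((hfst.pow 2).mul hsnd).mul ((hasFDerivAt_const (1 : ℝ) p).sub hsnd)
  refine (h1.prodMk h2).congr_fderiv ?_
  ext <;> simp [fderivDeltaSubst] <;> ring

theorem det_fderivDeltaSubst (p : ℝ × ℝ) : (fderivDeltaSubst p).det = -(p.1 ^ 2 * p.2) := by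
  rw [fderivDeltaSubst, det_clmOfEntries]; ring

theorem injOn_deltaSubst : InjOn deltaSubst {q | q.1 ≠ 0 ∧ q.2 ≠ 0} := by
  rintro ⟨s, t⟩ ⟨hs, ht⟩ ⟨s', t'⟩ -
  simp only [deltaSubst, Prod.mk.injEq]
  rintro ⟨hu, hv⟩
  have hs' : s * (s * t) = s' * (s * t) := by
    linear_combination hv + (s * t + s' * t' - s') * hu
  have hss' : s = s' := mul_right_cancel₀ (mul_ne_zero hs ht) hs'
  subst hss'
  exact ⟨rfl, mul_left_cancel₀ hs hu⟩

theorem mapsTo_deltaSubst :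
    MapsTo deltaSubst (Icc 0 1 ×ˢ Icc 0 1) {q : ℝ × ℝ | 0 ≤ q.2 ∧ q.2 ≤ q.1 ∧ q.1 ≤ 1} := by
  rintro ⟨s, t⟩ ⟨⟨hs0, hs1⟩, ⟨ht0, ht1⟩⟩
  simp only [deltaSubst, mem_ofPred_eq]
  have h1t : 0 ≤ 1 - t := by linarith
  refine ⟨by positivity, ?_, by nlinarith⟩
  nlinarith [mul_nonneg (mul_nonneg hs0 ht0) (mul_nonneg (sub_nonneg.2 hs1) h1t),
    mul_nonneg (mul_nonneg hs0 ht0) ht0]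

noncomputable def triangleIntegrand (a b c : ℝ) (q : ℝ × ℝ) : ℝ :=
  |a * q.1 ^ 3 * q.2 ^ 2 + b * q.1 ^ 5 * q.2 + c * q.1 ^ 7| ^ 3 / (q.1 * q.2 + q.1 ^ 3) ^ 8

theorem jacobian_mul_triangleIntegrand_deltaSubst (a b c : ℝ) {s t : ℝ} (hs : 0 < s)
    (ht : 0 < t) :
    s ^ 2 * t * triangleIntegrand a b c (deltaSubst (s, t)) =
      s⁻¹ * |a + (b - 2 * a) * t + (a - b + c) * t ^ 2| ^ 3 := by
  have hnum : a * (s * t) ^ 3 * (s ^ 2 * t * (1 - t)) ^ 2 +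
      b * (s * t) ^ 5 * (s ^ 2 * t * (1 - t)) + c * (s * t) ^ 7 =
        s ^ 7 * t ^ 5 * (a + (b - 2 * a) * t + (a - b + c) * t ^ 2) := by
    ring
  have hden : s * t * (s ^ 2 * t * (1 - t)) + (s * t) ^ 3 = s ^ 3 * t ^ 2 := by ring
  rw [triangleIntegrand, deltaSubst, hnum, hden, abs_mul,
    abs_of_pos (by positivity : 0 < s ^ 7 * t ^ 5)]
  field_simp

theorem lintegral_inv_mul_le_setLIntegral_triangleIntegrand (a b c : ℝ) :
    (∫⁻ s in Ioo (0:ℝ) 1, ENNReal.ofReal s⁻¹) *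
        ∫⁻ t in Ioo (0:ℝ) 1, ENNReal.ofReal (|a + (b - 2 * a) * t + (a - b + c) * t ^ 2| ^ 3) ≤
      ∫⁻ q in {q : ℝ × ℝ | 0 ≤ q.2 ∧ q.2 ≤ q.1 ∧ q.1 ≤ 1},
        ENNReal.ofReal (triangleIntegrand a b c q) := by
  set S := Ioo (0:ℝ) 1 ×ˢ Ioo (0:ℝ) 1
  have hS : MeasurableSet S := measurableSet_Ioo.prod measurableSet_Ioo
  calc (∫⁻ s in Ioo (0:ℝ) 1, ENNReal.ofReal s⁻¹) *
        ∫⁻ t in Ioo (0:ℝ) 1, ENNReal.ofReal (|a + (b - 2 * a) * t + (a - b + c) * t ^ 2| ^ 3)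
      = ∫⁻ p in S, ENNReal.ofReal p.1⁻¹ *
          ENNReal.ofReal (|a + (b - 2 * a) * p.2 + (a - b + c) * p.2 ^ 2| ^ 3) := by
        rw [Measure.volume_eq_prod, ← Measure.prod_restrict]
        exact (lintegral_prod_mul (by fun_prop) (by fun_prop)).symm
    _ = ∫⁻ p in S, ENNReal.ofReal |(fderivDeltaSubst p).det| *
          ENNReal.ofReal (triangleIntegrand a b c (deltaSubst p)) := by
        refine setLIntegral_congr_fun hS fun ⟨s, t⟩ ⟨⟨hs, _⟩, ⟨ht, _⟩⟩ ↦ ?_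
        have hJ : |(fderivDeltaSubst (s, t)).det| = s ^ 2 * t := by
          rw [det_fderivDeltaSubst, abs_neg, abs_of_pos (by positivity)]
        rw [hJ, ← ENNReal.ofReal_mul (inv_nonneg.2 hs.le),
          ← ENNReal.ofReal_mul (by positivity : (0:ℝ) ≤ s ^ 2 * t),
          jacobian_mul_triangleIntegrand_deltaSubst a b c hs ht]
    _ = ∫⁻ q in deltaSubst '' S, ENNReal.ofReal (triangleIntegrand a b c q) :=
        (lintegral_image_eq_lintegral_abs_det_fderiv_mul volume hS
          (fun p _ ↦ (hasFDerivAt_deltaSubst p).hasFDerivWithinAt)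
          (injOn_deltaSubst.mono fun p hp ↦ by exact ⟨hp.1.1.ne', hp.2.1.ne'⟩)
          fun q ↦ ENNReal.ofReal (triangleIntegrand a b c q)).symm
    _ ≤ _ := lintegral_mono_set ((mapsTo_deltaSubst.mono_left
          (prod_mono Ioo_subset_Icc_self Ioo_subset_Icc_self)).image_subset)

/-- Via the substitution `(u,v) = (st, s²t(1−t))`:
`∫_Δ |a u³v² + b u⁵v + c u⁷|³/(uv+u³)⁸ ≥ (∫₀¹ s⁻¹ ds) · (∫₀¹ |a+(b−2a)t+(a−b+c)t²|³ dt)`,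
the first factor being `+∞`; hence finiteness of the left side forces `a = b = c = 0`. -/
theorem stmt5 (a b c : ℝ) :
    (∫⁻ q in {q : ℝ × ℝ | 0 ≤ q.2 ∧ q.2 ≤ q.1 ∧ q.1 ≤ 1},
        ENNReal.ofReal (|a * q.1 ^ 3 * q.2 ^ 2 + b * q.1 ^ 5 * q.2 + c * q.1 ^ 7| ^ 3 /
          (q.1 * q.2 + q.1 ^ 3) ^ 8)) ≥
      (∫⁻ s in Ioo (0:ℝ) 1, ENNReal.ofReal s⁻¹) *
        (∫⁻ t in Ioo (0:ℝ) 1,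
          ENNReal.ofReal (|a + (b - 2 * a) * t + (a - b + c) * t ^ 2| ^ 3)) ∧
    (∫⁻ s in Ioo (0:ℝ) 1, ENNReal.ofReal s⁻¹) = ⊤ ∧
    ((∫⁻ q in {q : ℝ × ℝ | 0 ≤ q.2 ∧ q.2 ≤ q.1 ∧ q.1 ≤ 1},
        ENNReal.ofReal (|a * q.1 ^ 3 * q.2 ^ 2 + b * q.1 ^ 5 * q.2 + c * q.1 ^ 7| ^ 3 /
          (q.1 * q.2 + q.1 ^ 3) ^ 8)) < ⊤ → a = 0 ∧ b = 0 ∧ c = 0) := by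
  have hle := lintegral_inv_mul_le_setLIntegral_triangleIntegrand a b c
  have hinv := lintegral_Ioo_zero_inv_eq_top one_pos
  refine ⟨hle, hinv, fun hfin ↦ ?_⟩
  have hquad : ∫⁻ t in Ioo (0:ℝ) 1,
      ENNReal.ofReal (|a + (b - 2 * a) * t + (a - b + c) * t ^ 2| ^ 3) = 0 := by
    by_contra hne
    rw [hinv, ENNReal.top_mul hne, top_le_iff] at hle
    exact hfin.ne hle
  obtain ⟨ha, hb, hc⟩ := quadratic_coeffs_eq_zero_of_eqOn_Ioo
    (eqOn_zero_of_setLIntegral_ofReal_abs_pow_eq_zero isOpen_Ioo (by fun_prop) three_ne_zero hquad)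
  exact ⟨ha, by linarith, by linarith⟩
end

section
/- Let μ : [0,1]² → ℝ be a polynomial of the form μ(u,v) = 4uv + 2βu³ + 2γv³ + ν(u,v) with β, γ > 0, where ν(u,v) = O(u²v + uv² + (u+v)⁴) near the origin, and suppose μ > 0 on [0,1]² \ {(0,0)}. Then there exist constants c₁, c₂ > 0 such that c₁(uv + u³) ≤ μ(u,v) ≤ c₂(uv + u³) for all (u,v) in the triangle Δ = {(u,v) ∈ [0,1]² : v ≤ u}. -/
/-!
Write `w(u,v) = uv + u³`. On the triangle `0 ≤ v ≤ u` the principal part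
`4uv + 2βu³ + 2γv³` is comparable to `w`, while the remainder satisfies
`u²v + uv² + (u+v)⁴ ≤ 16 u w`, so `ν = o(w)` at the origin and `μ` is comparable to `w`
on `{u < ρ}` for small `ρ`. On the compact rest `{u ≥ ρ}` of the square both `μ` and `w`
are continuous and positive, so their ratio is bounded above and away from zero.
-/

open Set

theorem IsCompact.exists_pos_mul_le_and_le_mul {X : Type*} [TopologicalSpace X] {K : Set X}
    (hK : IsCompact K) {f g : X → ℝ} (hf : ContinuousOn f K) (hg : ContinuousOn g K)
    (hf_pos : ∀ x ∈ K, 0 < f x) (hg_pos : ∀ x ∈ K, 0 < g x) :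
    ∃ c₁ > (0:ℝ), ∃ c₂ > (0:ℝ), ∀ x ∈ K, c₁ * g x ≤ f x ∧ f x ≤ c₂ * g x := by
  rcases K.eq_empty_or_nonempty with rfl | hne
  · exact ⟨1, one_pos, 1, one_pos, by simp⟩
  have hratio : ContinuousOn (fun x => f x / g x) K :=
    hf.div hg fun x hx => (hg_pos x hx).ne'
  obtain ⟨x₀, hx₀, hmin⟩ := hK.exists_isMinOn hne hratio
  obtain ⟨x₁, hx₁, hmax⟩ := hK.exists_isMaxOn hne hratio
  refine ⟨f x₀ / g x₀, div_pos (hf_pos x₀ hx₀) (hg_pos x₀ hx₀),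
    f x₁ / g x₁, div_pos (hf_pos x₁ hx₁) (hg_pos x₁ hx₁), fun x hx => ⟨?_, ?_⟩⟩
  · exact (le_div_iff₀ (hg_pos x hx)).1 (hmin hx)
  · exact (div_le_iff₀ (hg_pos x hx)).1 (hmax hx)

section Triangle

variable {u v : ℝ}

theorem min_mul_le_principal_part {β γ : ℝ} (hγ : 0 ≤ γ) (hv : 0 ≤ v) (hvu : v ≤ u) :
    min 4 (2 * β) * (u * v + u ^ 3) ≤ 4 * u * v + 2 * β * u ^ 3 + 2 * γ * v ^ 3 := by
  have huv : 0 ≤ u * v := mul_nonneg (hv.trans hvu) hv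
  have hu3 : 0 ≤ u ^ 3 := pow_nonneg (hv.trans hvu) 3
  nlinarith [min_le_left 4 (2 * β), min_le_right 4 (2 * β), pow_nonneg hv 3,
    mul_nonneg (sub_nonneg.2 (min_le_left 4 (2 * β))) huv,
    mul_nonneg (sub_nonneg.2 (min_le_right 4 (2 * β))) hu3]

theorem principal_part_le {β γ : ℝ} (hβ : 0 ≤ β) (hγ : 0 ≤ γ) (hv : 0 ≤ v) (hvu : v ≤ u) :
    4 * u * v + 2 * β * u ^ 3 + 2 * γ * v ^ 3 ≤ (4 + 2 * β + 2 * γ) * (u * v + u ^ 3) := by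
  have huv : 0 ≤ u * v := mul_nonneg (hv.trans hvu) hv
  have hu3 : 0 ≤ u ^ 3 := pow_nonneg (hv.trans hvu) 3
  have hv3 : v ^ 3 ≤ u ^ 3 := pow_le_pow_left₀ hv hvu 3
  nlinarith [mul_le_mul_of_nonneg_left hv3 hγ, mul_nonneg hβ huv, mul_nonneg hγ huv]

theorem remainder_le_mul (hv : 0 ≤ v) (hvu : v ≤ u) :
    u ^ 2 * v + u * v ^ 2 + (u + v) ^ 4 ≤ 16 * u * (u * v + u ^ 3) := by
  have hu : 0 ≤ u := hv.trans hvu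
  have h4 : (u + v) ^ 4 ≤ (2 * u) ^ 4 := pow_le_pow_left₀ (by linarith) (by linarith) 4
  nlinarith [mul_le_mul_of_nonneg_left hvu (mul_nonneg hu hv), mul_nonneg hu (mul_nonneg hu hv)]

end Triangle

theorem exists_abs_le_mul_near_origin {ν : ℝ × ℝ → ℝ}
    (hνO : ∃ C δ : ℝ, 0 < δ ∧ ∀ q ∈ Icc (0:ℝ) 1 ×ˢ Icc (0:ℝ) 1, ‖q‖ < δ →
      |ν q| ≤ C * (q.1 ^ 2 * q.2 + q.1 * q.2 ^ 2 + (q.1 + q.2) ^ 4))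
    {ε : ℝ} (hε : 0 < ε) :
    ∃ ρ > (0:ℝ), ∀ q ∈ Icc (0:ℝ) 1 ×ˢ Icc (0:ℝ) 1, q.2 ≤ q.1 → q.1 < ρ →
      |ν q| ≤ ε * (q.1 * q.2 + q.1 ^ 3) := by
  obtain ⟨C, δ, hδ, hν⟩ := hνO
  set C' := max C 1
  have hC' : 0 < C' := lt_of_lt_of_le one_pos (le_max_right _ _)
  refine ⟨min δ (ε / (16 * C')), lt_min hδ (by positivity), ?_⟩
  rintro q hq hvu hρ
  have hu : 0 ≤ q.1 := hq.1.1
  have hv : 0 ≤ q.2 := hq.2.1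
  have hnorm : ‖q‖ < δ := by
    rw [Prod.norm_def, Real.norm_of_nonneg hu, Real.norm_of_nonneg hv, max_eq_left hvu]
    exact hρ.trans_le (min_le_left _ _)
  have hw : 0 ≤ q.1 * q.2 + q.1 ^ 3 := by positivity
  have hρε : 16 * C' * q.1 ≤ ε := by
    have := hρ.le.trans (min_le_right _ _)
    rwa [le_div_iff₀ (by positivity), mul_comm] at this
  calc |ν q| ≤ C * (q.1 ^ 2 * q.2 + q.1 * q.2 ^ 2 + (q.1 + q.2) ^ 4) := hν q hq hnorm
    _ ≤ C' * (q.1 ^ 2 * q.2 + q.1 * q.2 ^ 2 + (q.1 + q.2) ^ 4) :=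
        mul_le_mul_of_nonneg_right (le_max_left _ _) (by positivity)
    _ ≤ C' * (16 * q.1 * (q.1 * q.2 + q.1 ^ 3)) :=
        mul_le_mul_of_nonneg_left (remainder_le_mul hv hvu) hC'.le
    _ = 16 * C' * q.1 * (q.1 * q.2 + q.1 ^ 3) := by ring
    _ ≤ ε * (q.1 * q.2 + q.1 ^ 3) := mul_le_mul_of_nonneg_right hρε hw

theorem isCompact_square_inter_le_fst (ρ : ℝ) :
    IsCompact (Icc (0:ℝ) 1 ×ˢ Icc (0:ℝ) 1 ∩ {q : ℝ × ℝ | ρ ≤ q.1}) :=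
  (isCompact_Icc.prod isCompact_Icc).inter_right (isClosed_le continuous_const continuous_fst)

/-- Lemma on the Jacobian determinant: if
`μ(u,v) = 4uv + 2βu³ + 2γv³ + ν(u,v)` with `β, γ > 0`,
`ν = O(u²v + uv² + (u+v)⁴)` near the origin, `ν` continuous, and `μ > 0` on
`[0,1]² \ {(0,0)}`, then there are constants `c₁, c₂ > 0` with
`c₁(uv + u³) ≤ μ(u,v) ≤ c₂(uv + u³)` on the triangle `Δ = {(u,v) ∈ [0,1]² : v ≤ u}`. -/
theorem stmt7 (β γ : ℝ) (hβ : 0 < β) (hγ : 0 < γ) (ν μ : ℝ × ℝ → ℝ)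
    (hνc : ContinuousOn ν (Icc (0:ℝ) 1 ×ˢ Icc (0:ℝ) 1))
    (hνO : ∃ C δ : ℝ, 0 < δ ∧ ∀ q ∈ Icc (0:ℝ) 1 ×ˢ Icc (0:ℝ) 1, ‖q‖ < δ →
      |ν q| ≤ C * (q.1 ^ 2 * q.2 + q.1 * q.2 ^ 2 + (q.1 + q.2) ^ 4))
    (hμ : ∀ q : ℝ × ℝ, μ q = 4 * q.1 * q.2 + 2 * β * q.1 ^ 3 + 2 * γ * q.2 ^ 3 + ν q)
    (hpos : ∀ q ∈ (Icc (0:ℝ) 1 ×ˢ Icc (0:ℝ) 1) \ {((0:ℝ), (0:ℝ))}, 0 < μ q) :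
    ∃ c₁ > (0:ℝ), ∃ c₂ > (0:ℝ), ∀ q ∈ Icc (0:ℝ) 1 ×ˢ Icc (0:ℝ) 1, q.2 ≤ q.1 →
      c₁ * (q.1 * q.2 + q.1 ^ 3) ≤ μ q ∧ μ q ≤ c₂ * (q.1 * q.2 + q.1 ^ 3) := by
  set m := min 4 (2 * β)
  have hm : 0 < m := lt_min four_pos (by positivity)
  obtain ⟨ρ, hρ, hνsmall⟩ := exists_abs_le_mul_near_origin hνO (half_pos hm)
  have hμc : ContinuousOn μ (Icc (0:ℝ) 1 ×ˢ Icc (0:ℝ) 1) := by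
    rw [funext hμ]
    exact (by fun_prop : Continuous fun q : ℝ × ℝ =>
      4 * q.1 * q.2 + 2 * β * q.1 ^ 3 + 2 * γ * q.2 ^ 3).continuousOn.add hνc
  obtain ⟨a₁, ha₁, a₂, ha₂, hfar⟩ :=
    (isCompact_square_inter_le_fst ρ).exists_pos_mul_le_and_le_mul
      (g := fun q => q.1 * q.2 + q.1 ^ 3) (hμc.mono inter_subset_left) (by fun_prop)
    (fun q hq => hpos q ⟨hq.1, fun h =>
      (hρ.trans_le hq.2).ne' (congrArg Prod.fst (mem_singleton_iff.1 h))⟩)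
    (fun q hq => by have : 0 < q.1 := hρ.trans_le hq.2; have := hq.1.2.1; positivity)
  refine ⟨min (m / 2) a₁, lt_min (half_pos hm) ha₁,
    max (4 + 2 * β + 2 * γ + m / 2) a₂, lt_max_of_lt_right ha₂, fun q hq hvu => ?_⟩
  have hw : 0 ≤ q.1 * q.2 + q.1 ^ 3 := by have := hq.1.1; have := hq.2.1; positivity
  rcases lt_or_ge q.1 ρ with hnear | hρu
  · have hlow := min_mul_le_principal_part (β := β) hγ.le hq.2.1 hvu
    have hhigh := principal_part_le hβ.le hγ.le hq.2.1 hvu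
    have hν := abs_le.1 (hνsmall q hq hvu hnear)
    rw [hμ q]
    constructor <;> nlinarith [min_le_left (m / 2) a₁, le_max_left (4 + 2 * β + 2 * γ + m / 2) a₂]
  · obtain ⟨h₁, h₂⟩ := hfar q ⟨hq, hρu⟩
    constructor <;> nlinarith [min_le_right (m / 2) a₁, le_max_right (4 + 2 * β + 2 * γ + m / 2) a₂]
end

section
/- Let μ(u,v) = 4uv + 2βu³ + 2γv³ + ν(u,v) be a real polynomial with remainder ν of order O(u²v + uv² + (u+v)⁴), and suppose μ does not vanish on [0,1]² \ {(0,0)}. Then β > 0. -/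
/-!
Suppose `β < 0`. Along the edge `v = 0` we have `μ(t, 0) = 2βt³ + O(t⁴) < 0` for small `t > 0`,
while on the diagonal `μ(t, t) = 4t² + O(t³) > 0`. By the intermediate value theorem `μ`
vanishes somewhere on the segment `{t} × [0, t]`, which lies in `[0,1]² \ {(0,0)}`.
-/

open Set Filter Topology Asymptotics

theorem Asymptotics.IsLittleO.eventually_pos_const_mul_add {α : Type*} {l : Filter α}
    {f g : α → ℝ} (hf : f =o[l] g) (hg : ∀ᶠ x in l, 0 < g x) {a : ℝ} (ha : 0 < a) :
    ∀ᶠ x in l, 0 < a * g x + f x := by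
  filter_upwards [hf.bound (half_pos ha), hg] with x hfx hgx
  rw [Real.norm_eq_abs, Real.norm_eq_abs, abs_of_pos hgx] at hfx
  nlinarith [neg_abs_le (f x)]

theorem Asymptotics.isBigO_nhdsWithin_zero_of_bound {E : Type*} [NormedAddCommGroup E]
    {S : Set E} {ν w : E → ℝ} {C δ : ℝ} (hδ : 0 < δ)
    (h : ∀ q ∈ S, ‖q‖ < δ → |ν q| ≤ C * w q) : ν =O[𝓝[S] 0] w := by
  refine IsBigO.of_bound |C| ?_
  have hball : Metric.ball (0 : E) δ ∈ 𝓝[S] 0 :=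
    mem_nhdsWithin_of_mem_nhds (Metric.ball_mem_nhds 0 hδ)
  filter_upwards [self_mem_nhdsWithin, hball] with q hqS hqδ
  rw [mem_ball_zero_iff] at hqδ
  rw [Real.norm_eq_abs, Real.norm_eq_abs, ← abs_mul]
  exact (h q hqS hqδ).trans (le_abs_self _)

lemma tendsto_nhdsWithin_unitSquare {p : ℝ → ℝ × ℝ} (hp : Continuous p) (hp0 : p 0 = (0, 0))
    (hpS : ∀ t ∈ Ioc (0 : ℝ) 1, p t ∈ Icc (0 : ℝ) 1 ×ˢ Icc (0 : ℝ) 1) :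
    Tendsto p (𝓝[>] 0) (𝓝[Icc (0 : ℝ) 1 ×ˢ Icc (0 : ℝ) 1] 0) := by
  refine tendsto_nhdsWithin_iff.2 ⟨?_, mem_of_superset (Ioc_mem_nhdsGT one_pos) hpS⟩
  rw [Prod.zero_eq_mk, ← hp0]
  exact hp.continuousAt.tendsto.mono_left nhdsWithin_le_nhds

section Expansion

variable {β γ : ℝ} {ν μ : ℝ × ℝ → ℝ}
  (hν : ν =O[𝓝[Icc (0 : ℝ) 1 ×ˢ Icc (0 : ℝ) 1] 0]
    fun q => q.1 ^ 2 * q.2 + q.1 * q.2 ^ 2 + (q.1 + q.2) ^ 4)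
  (hμ : ∀ q : ℝ × ℝ, μ q = 4 * q.1 * q.2 + 2 * β * q.1 ^ 3 + 2 * γ * q.2 ^ 3 + ν q)
include hν hμ

lemma eventually_edge_neg (hβ : β < 0) : ∀ᶠ t in 𝓝[>] (0 : ℝ), μ (t, 0) < 0 := by
  have hedge : (fun t : ℝ => ν (t, 0)) =o[𝓝[>] 0] fun t => t ^ 3 := by
    have := hν.comp_tendsto (tendsto_nhdsWithin_unitSquare (p := fun t => (t, 0)) (by fun_prop)
      rfl fun t ht => ⟨Ioc_subset_Icc_self ht, left_mem_Icc.2 zero_le_one⟩)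
    refine (this.congr_right (g₂ := fun t => t ^ 4) fun t => by simp).trans_isLittleO ?_
    exact (isLittleO_pow_pow (by norm_num)).mono nhdsWithin_le_nhds
  filter_upwards [hedge.neg_left.eventually_pos_const_mul_add
    (eventually_mem_nhdsWithin.mono fun t ht => pow_pos ht 3)
    (neg_pos.2 (mul_neg_of_pos_of_neg two_pos hβ))] with t ht
  rw [hμ]
  simp only [mul_zero, zero_pow three_ne_zero, zero_add, add_zero] at ht ⊢
  linarith

lemma eventually_diag_pos : ∀ᶠ t in 𝓝[>] (0 : ℝ), 0 < μ (t, t) := by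
  have hdiag : (fun t : ℝ => 2 * (β + γ) * t ^ 3 + ν (t, t)) =o[𝓝[>] 0] fun t => t ^ 2 := by
    have hν' := hν.comp_tendsto (tendsto_nhdsWithin_unitSquare (p := fun t => (t, t)) (by fun_prop)
      rfl fun t ht => ⟨Ioc_subset_Icc_self ht, Ioc_subset_Icc_self ht⟩)
    have hweight : (fun t : ℝ => t ^ 2 * t + t * t ^ 2 + (t + t) ^ 4) =O[𝓝 0] fun t => t ^ 3 := by
      have h4 : (fun t : ℝ => 16 * t ^ 4) =O[𝓝 0] fun t => t ^ 3 :=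
        (isBigO_const_mul_self 16 _ _).trans (isLittleO_pow_pow (by norm_num)).isBigO
      exact ((isBigO_const_mul_self 2 _ _).add h4).congr_left fun t => by ring
    refine ((isBigO_const_mul_self _ _ _).add (hν'.trans (hweight.mono nhdsWithin_le_nhds)))
      |>.trans_isLittleO ?_
    exact (isLittleO_pow_pow (by norm_num)).mono nhdsWithin_le_nhds
  filter_upwards [hdiag.eventually_pos_const_mul_add
    (eventually_mem_nhdsWithin.mono fun t ht => pow_pos ht 2) four_pos] with t ht
  rw [hμ]
  linarith

end Expansion

lemma exists_zero_on_vertical_segment {μ : ℝ × ℝ → ℝ}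
    (hμc : ContinuousOn μ (Icc (0 : ℝ) 1 ×ˢ Icc (0 : ℝ) 1)) {t : ℝ} (ht : t ∈ Ioc (0 : ℝ) 1)
    (h0 : μ (t, 0) < 0) (ht' : 0 < μ (t, t)) : ∃ s ∈ Icc 0 t, μ (t, s) = 0 := by
  have hseg : MapsTo (fun s => (t, s)) (Icc 0 t) (Icc (0 : ℝ) 1 ×ˢ Icc (0 : ℝ) 1) :=
    fun s hs => ⟨Ioc_subset_Icc_self ht, hs.1, hs.2.trans ht.2⟩
  exact intermediate_value_Icc ht.1.le (hμc.comp (by fun_prop) hseg) ⟨h0.le, ht'.le⟩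

/-- If `μ(u,v) = 4uv + 2βu³ + 2γv³ + ν(u,v)` (with `ν = O(u²v + uv² + (u+v)⁴)`
near the origin, `ν` continuous, and `β ≠ 0` as guaranteed by Property (iii)
of a D-map) does not vanish on `[0,1]² \ {(0,0)}`, then `β > 0`. -/
theorem stmt9 (β γ : ℝ) (hβ : β ≠ 0) (ν μ : ℝ × ℝ → ℝ)
    (hνc : ContinuousOn ν (Icc (0:ℝ) 1 ×ˢ Icc (0:ℝ) 1))
    (hνO : ∃ C δ : ℝ, 0 < δ ∧ ∀ q ∈ Icc (0:ℝ) 1 ×ˢ Icc (0:ℝ) 1, ‖q‖ < δ →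
      |ν q| ≤ C * (q.1 ^ 2 * q.2 + q.1 * q.2 ^ 2 + (q.1 + q.2) ^ 4))
    (hμ : ∀ q : ℝ × ℝ, μ q = 4 * q.1 * q.2 + 2 * β * q.1 ^ 3 + 2 * γ * q.2 ^ 3 + ν q)
    (hnz : ∀ q ∈ (Icc (0:ℝ) 1 ×ˢ Icc (0:ℝ) 1) \ {((0:ℝ), (0:ℝ))}, μ q ≠ 0) :
    0 < β := by
  obtain ⟨C, δ, hδ, hC⟩ := hνO
  have hν := isBigO_nhdsWithin_zero_of_bound hδ hC
  refine hβ.lt_or_gt.resolve_left fun hβneg => ?_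
  have hμc : ContinuousOn μ (Icc (0:ℝ) 1 ×ˢ Icc (0:ℝ) 1) := by
    rw [show μ = _ from funext hμ]
    exact (Continuous.continuousOn (by fun_prop)).add hνc
  obtain ⟨t, ht, hedge, hdiag⟩ := (Eventually.and (Ioc_mem_nhdsGT one_pos)
    ((eventually_edge_neg hν hμ hβneg).and (eventually_diag_pos hν hμ))).exists
  obtain ⟨s, hs, hzero⟩ := exists_zero_on_vertical_segment hμc ht hedge hdiag
  refine hnz (t, s) ⟨⟨Ioc_subset_Icc_self ht, hs.1, hs.2.trans ht.2⟩, ?_⟩ hzero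
  simp [ht.1.ne']
end

section
/- Let M(u,v) = u^m v^n / μ(u,v)^ℓ on Σ* = [0,1]² \ {(0,0)}, where μ(u,v) = 4uv + 2βu³ + 2γv³ + ν(u,v) with β, γ > 0, ν = O(u²v + uv² + (u+v)⁴), and μ > 0 on Σ*. Then ∫_{Σ} |M|^p μ < ∞ if and only if m + n + min{m,n} > 3ℓ − 6/p. -/
/-!
On the square, `μ` is comparable to `phi (u, v) = uv + u³ + v³`: near the origin `ν` is a small
multiple of `phi`, away from it both functions are continuous and positive on a compact set.
Hence `|M|^p μ ≍ u^a v^b phi^(-s)` with `a = mp`, `b = np`, `s = ℓp - 1`, and this weight is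
integrable iff `3s < 2a + b + 3` and `3s < a + 2b + 3`: these are the edges `2x + y = 3` and
`x + 2y = 3` of the Newton polygon of `phi`, evaluated at `(a + 1, b + 1) / s`.
For sufficiency, `phi^(-s) ≤ (uv)^(-t) (v³)^(-(s-t))` with a suitable `t ∈ [0, s]` (or the same
with `u, v` swapped) bounds the weight by a product of integrable powers.
For necessity, `phi ≤ 3u³` on the cusp `v ≤ u²`, whose contribution already diverges.
-/

open MeasureTheory Set Filter Asymptotics
open scoped ENNReal

section Transfer

variable {α : Type*} {s : Set α} {f g : α → ℝ}

lemma isBigO_principal_of_le_mul (C : ℝ) (hf : ∀ x ∈ s, 0 ≤ f x) (hg : ∀ x ∈ s, 0 ≤ g x)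
    (hfg : ∀ x ∈ s, f x ≤ C * g x) : f =O[𝓟 s] g :=
  isBigO_principal.2 ⟨C, fun x hx => by
    rw [Real.norm_of_nonneg (hf x hx), Real.norm_of_nonneg (hg x hx)]; exact hfg x hx⟩

lemma isTheta_principal_of_le_of_le {c C : ℝ} (hc : 0 < c) (hg : ∀ x ∈ s, 0 ≤ g x)
    (hfg : ∀ x ∈ s, c * g x ≤ f x ∧ f x ≤ C * g x) : f =Θ[𝓟 s] g := by
  have hf : ∀ x ∈ s, 0 ≤ f x := fun x hx => (mul_nonneg hc.le (hg x hx)).trans (hfg x hx).1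
  refine ⟨isBigO_principal_of_le_mul C hf hg fun x hx => (hfg x hx).2,
    isBigO_principal_of_le_mul c⁻¹ hg hf fun x hx => ?_⟩
  rw [inv_mul_eq_div, le_div_iff₀' hc]
  exact (hfg x hx).1

lemma Asymptotics.IsBigO.setLIntegral_ofReal_lt_top [MeasurableSpace α] {μ : Measure α}
    (hfg : f =O[𝓟 s] g) (hs : MeasurableSet s) (hg : ∀ x ∈ s, 0 ≤ g x)
    (hint : ∫⁻ x in s, ENNReal.ofReal (g x) ∂μ < ∞) :
    ∫⁻ x in s, ENNReal.ofReal (f x) ∂μ < ∞ := by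
  obtain ⟨c, hc0, hc⟩ := hfg.exists_nonneg
  rw [isBigOWith_principal] at hc
  calc ∫⁻ x in s, ENNReal.ofReal (f x) ∂μ
      ≤ ∫⁻ x in s, ENNReal.ofReal c * ENNReal.ofReal (g x) ∂μ := by
        refine setLIntegral_mono' hs fun x hx => ?_
        rw [← ENNReal.ofReal_mul hc0]
        refine ENNReal.ofReal_le_ofReal ((le_abs_self _).trans ?_)
        simpa [abs_of_nonneg (hg x hx)] using hc x hx
    _ = ENNReal.ofReal c * ∫⁻ x in s, ENNReal.ofReal (g x) ∂μ :=
        lintegral_const_mul' _ _ ENNReal.ofReal_ne_top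
    _ < ∞ := ENNReal.mul_lt_top ENNReal.ofReal_lt_top hint

lemma Asymptotics.IsTheta.setLIntegral_ofReal_lt_top_iff [MeasurableSpace α] {μ : Measure α}
    (hfg : f =Θ[𝓟 s] g) (hs : MeasurableSet s) (hf : ∀ x ∈ s, 0 ≤ f x) (hg : ∀ x ∈ s, 0 ≤ g x) :
    ∫⁻ x in s, ENNReal.ofReal (f x) ∂μ < ∞ ↔ ∫⁻ x in s, ENNReal.ofReal (g x) ∂μ < ∞ :=
  ⟨hfg.2.setLIntegral_ofReal_lt_top hs hf, hfg.1.setLIntegral_ofReal_lt_top hs hg⟩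

end Transfer

lemma lintegral_Ioo_rpow_lt_top_iff {e : ℝ} :
    ∫⁻ x in Ioo (0:ℝ) 1, ENNReal.ofReal (x ^ e) < ∞ ↔ -1 < e := by
  have h0 : 0 ≤ᵐ[volume.restrict (Ioo (0:ℝ) 1)] fun x => x ^ e :=
    ae_restrict_of_forall_mem measurableSet_Ioo fun x hx => Real.rpow_nonneg hx.1.le e
  rw [← hasFiniteIntegral_iff_ofReal h0, ← intervalIntegral.integrableOn_Ioo_rpow_iff one_pos]
  exact ⟨fun h => ⟨(measurable_id.pow_const e).aestronglyMeasurable, h⟩, fun h => h.2⟩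

lemma lintegral_Ioc_rpow {b t : ℝ} (hb : -1 < b) (ht : 0 ≤ t) :
    ∫⁻ y in Ioc 0 t, ENNReal.ofReal (y ^ b) = ENNReal.ofReal (t ^ (b + 1) / (b + 1)) := by
  have hint : IntegrableOn (fun y : ℝ => y ^ b) (Ioc 0 t) := by
    rw [← intervalIntegrable_iff_integrableOn_Ioc_of_le ht]
    exact intervalIntegral.intervalIntegrable_rpow' hb
  rw [← ofReal_integral_eq_lintegral_ofReal hint
    (ae_restrict_of_forall_mem measurableSet_Ioc fun y hy => Real.rpow_nonneg hy.1.le b),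
    ← intervalIntegral.integral_of_le ht, integral_rpow (Or.inl hb),
    Real.zero_rpow (by linarith), sub_zero]

lemma lintegral_rpow_mul_rpow_lt_top {e₁ e₂ : ℝ} (h₁ : -1 < e₁) (h₂ : -1 < e₂) :
    ∫⁻ q in Ioo (0:ℝ) 1 ×ˢ Ioo (0:ℝ) 1, ENNReal.ofReal (q.1 ^ e₁ * q.2 ^ e₂) < ∞ := by
  rw [setLIntegral_congr_fun (measurableSet_Ioo.prod measurableSet_Ioo) fun q hq =>
    ENNReal.ofReal_mul (Real.rpow_nonneg hq.1.1.le e₁), Measure.volume_eq_prod,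
    ← Measure.prod_restrict, lintegral_prod_mul (f := fun x => ENNReal.ofReal (x ^ e₁))
    (g := fun y => ENNReal.ofReal (y ^ e₂)) (by fun_prop) (by fun_prop)]
  exact ENNReal.mul_lt_top (lintegral_Ioo_rpow_lt_top_iff.2 h₁)
    (lintegral_Ioo_rpow_lt_top_iff.2 h₂)

noncomputable def phi (q : ℝ × ℝ) : ℝ := q.1 * q.2 + q.1 ^ 3 + q.2 ^ 3

noncomputable def weight (a b s : ℝ) (q : ℝ × ℝ) : ℝ := q.1 ^ a * q.2 ^ b * phi q ^ (-s)

@[fun_prop]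
lemma continuous_phi : Continuous phi := by
  unfold phi; fun_prop

@[fun_prop]
lemma measurable_weight (a b s : ℝ) : Measurable (weight a b s) := by
  unfold weight; fun_prop

lemma phi_swap (q : ℝ × ℝ) : phi q.swap = phi q := by
  simp only [phi, Prod.fst_swap, Prod.snd_swap]; ring

lemma weight_swap (a b s : ℝ) (q : ℝ × ℝ) : weight a b s q.swap = weight b a s q := by
  simp only [weight, phi_swap, Prod.fst_swap, Prod.snd_swap]; ring

lemma phi_pos {q : ℝ × ℝ} (h₁ : 0 < q.1) (h₂ : 0 < q.2) : 0 < phi q := by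
  unfold phi; positivity

lemma phi_le_three {q : ℝ × ℝ} (hq : q ∈ Ioo (0:ℝ) 1 ×ˢ Ioo (0:ℝ) 1) : phi q ≤ 3 := by
  obtain ⟨⟨hx0, hx1⟩, hy0, hy1⟩ := hq
  have : q.1 * q.2 ≤ 1 := by nlinarith
  have : q.1 ^ 3 ≤ 1 := pow_le_one₀ hx0.le hx1.le
  have : q.2 ^ 3 ≤ 1 := pow_le_one₀ hy0.le hy1.le
  unfold phi; linarith

lemma phi_le_of_le_sq {x y : ℝ} (hx0 : 0 ≤ x) (hx1 : x ≤ 1) (hy0 : 0 ≤ y) (hy : y ≤ x ^ 2) :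
    phi (x, y) ≤ 3 * x ^ 3 := by
  have : x * y ≤ x ^ 3 := by nlinarith
  have : y ^ 3 ≤ x ^ 3 := by
    calc y ^ 3 ≤ (x ^ 2) ^ 3 := pow_le_pow_left₀ hy0 hy 3
      _ = x ^ 3 * x ^ 3 := by ring
      _ ≤ x ^ 3 := mul_le_of_le_one_left (by positivity) (pow_le_one₀ hx0 hx1)
  unfold phi; dsimp only; linarith

lemma weight_nonneg (a b s : ℝ) {q : ℝ × ℝ} (hq : q ∈ Ioo (0:ℝ) 1 ×ˢ Ioo (0:ℝ) 1) :
    0 ≤ weight a b s q := by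
  have := phi_pos hq.1.1 hq.2.1
  have := hq.1.1; have := hq.2.1
  unfold weight; positivity

lemma lintegral_weight_swap (a b s : ℝ) :
    ∫⁻ q in Ioo (0:ℝ) 1 ×ˢ Ioo (0:ℝ) 1, ENNReal.ofReal (weight a b s q) =
      ∫⁻ q in Ioo (0:ℝ) 1 ×ˢ Ioo (0:ℝ) 1, ENNReal.ofReal (weight b a s q) := by
  simp_rw [← weight_swap b a s, Measure.volume_eq_prod, ← Measure.prod_restrict]
  exact lintegral_prod_swap (μ := volume.restrict (Ioo (0:ℝ) 1))
    (ν := volume.restrict (Ioo (0:ℝ) 1)) fun q => ENNReal.ofReal (weight b a s q)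

lemma weight_le_three_rpow_mul_weight (a b : ℝ) {s s' : ℝ} (hss' : s ≤ s') {q : ℝ × ℝ}
    (hq : q ∈ Ioo (0:ℝ) 1 ×ˢ Ioo (0:ℝ) 1) :
    weight a b s q ≤ 3 ^ (s' - s) * weight a b s' q := by
  have hφ := phi_pos hq.1.1 hq.2.1
  have : phi q ^ (s' - s) ≤ 3 ^ (s' - s) :=
    Real.rpow_le_rpow hφ.le (phi_le_three hq) (by linarith)
  have hsplit : phi q ^ (-s) = phi q ^ (s' - s) * phi q ^ (-s') := by
    rw [← Real.rpow_add hφ]; ring_nf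
  have := hq.1.1; have := hq.2.1
  unfold weight
  rw [hsplit]
  calc q.1 ^ a * q.2 ^ b * (phi q ^ (s' - s) * phi q ^ (-s'))
      ≤ q.1 ^ a * q.2 ^ b * (3 ^ (s' - s) * phi q ^ (-s')) := by gcongr
    _ = _ := by ring

/-- Interpolating between `phi ≥ xy` and `phi ≥ y³`. -/
lemma weight_le_rpow_mul_rpow (a b : ℝ) {s u : ℝ} (hu : 0 ≤ u) (hus : u ≤ s) {q : ℝ × ℝ}
    (hq : q ∈ Ioo (0:ℝ) 1 ×ˢ Ioo (0:ℝ) 1) :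
    weight a b s q ≤ q.1 ^ (a - u) * q.2 ^ (b - 3 * s + 2 * u) := by
  obtain ⟨x, y⟩ := q
  obtain ⟨⟨hx, -⟩, hy, -⟩ := hq
  have hφ := phi_pos (q := (x, y)) hx hy
  have hxy : phi (x, y) ^ (-u) ≤ (x * y) ^ (-u) :=
    Real.rpow_le_rpow_of_nonpos (by positivity)
      (by unfold phi; dsimp only; nlinarith [pow_pos hx 3, pow_pos hy 3]) (by linarith)
  have hy3 : phi (x, y) ^ (-(s - u)) ≤ (y ^ 3) ^ (-(s - u)) :=
    Real.rpow_le_rpow_of_nonpos (by positivity)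
      (by unfold phi; dsimp only; nlinarith [pow_pos hx 3, mul_pos hx hy]) (by linarith)
  have hsplit : phi (x, y) ^ (-s) = phi (x, y) ^ (-u) * phi (x, y) ^ (-(s - u)) := by
    rw [← Real.rpow_add hφ]; ring_nf
  calc weight a b s (x, y)
        = x ^ a * y ^ b * (phi (x, y) ^ (-u) * phi (x, y) ^ (-(s - u))) := by rw [weight, hsplit]
    _ ≤ x ^ a * y ^ b * ((x * y) ^ (-u) * (y ^ 3) ^ (-(s - u))) := by gcongr
    _ = (x ^ a * x ^ (-u)) * (y ^ b * y ^ (-u) * y ^ (3 * -(s - u))) := by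
        rw [Real.mul_rpow hx.le hy.le, ← Real.rpow_natCast, ← Real.rpow_mul hy.le]
        push_cast; ring
    _ = x ^ (a - u) * y ^ (b - 3 * s + 2 * u) := by
        rw [← Real.rpow_add hx, ← Real.rpow_add hy, ← Real.rpow_add hy]; ring_nf

lemma rpow_le_weight_of_le_sq (a b : ℝ) {s x y : ℝ} (hs : 0 ≤ s) (hx0 : 0 < x) (hx1 : x ≤ 1)
    (hy0 : 0 < y) (hy : y ≤ x ^ 2) :
    3 ^ (-s) * x ^ (a - 3 * s) * y ^ b ≤ weight a b s (x, y) := by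
  have hφ : (3 * x ^ 3) ^ (-s) ≤ phi (x, y) ^ (-s) :=
    Real.rpow_le_rpow_of_nonpos (phi_pos hx0 hy0) (phi_le_of_le_sq hx0.le hx1 hy0.le hy)
      (by linarith)
  calc 3 ^ (-s) * x ^ (a - 3 * s) * y ^ b = x ^ a * y ^ b * (3 * x ^ 3) ^ (-s) := by
        rw [Real.mul_rpow (by norm_num) (by positivity), ← Real.rpow_natCast,
          ← Real.rpow_mul hx0.le, sub_eq_add_neg, Real.rpow_add hx0]
        push_cast; ring_nf
    _ ≤ weight a b s (x, y) := by unfold weight; dsimp only; gcongr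

lemma lintegral_weight_lt_top {a b s : ℝ} (ha : -1 < a) (hb : -1 < b) (hsb : s < b + 1)
    (h : 3 * s < 2 * a + b + 3) :
    ∫⁻ q in Ioo (0:ℝ) 1 ×ˢ Ioo (0:ℝ) 1, ENNReal.ofReal (weight a b s q) < ∞ := by
  have hS : MeasurableSet (Ioo (0:ℝ) 1 ×ˢ Ioo (0:ℝ) 1) :=
    measurableSet_Ioo.prod measurableSet_Ioo
  set s' := max s 0
  have hs' : 0 ≤ s' ∧ s' < b + 1 ∧ 3 * s' < 2 * a + b + 3 :=
    ⟨le_max_right _ _, max_lt hsb (by linarith),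
      (mul_max_of_nonneg _ _ (by norm_num : (0:ℝ) ≤ 3)).trans_lt (max_lt h (by linarith))⟩
  have hss' : weight a b s =O[𝓟 (Ioo (0:ℝ) 1 ×ˢ Ioo (0:ℝ) 1)] weight a b s' :=
    isBigO_principal_of_le_mul _ (fun _ => weight_nonneg a b s) (fun _ => weight_nonneg a b s')
      fun _ => weight_le_three_rpow_mul_weight a b (le_max_left s 0)
  refine hss'.setLIntegral_ofReal_lt_top hS (fun _ => weight_nonneg a b s') ?_
  obtain ⟨hs'0, hs'b, hs'h⟩ := hs'
  -- `u` makes both exponents of `weight_le_rpow_mul_rpow` exceed `-1`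
  obtain ⟨u, hu0, hus, hua, huL⟩ :
      ∃ u, 0 ≤ u ∧ u ≤ s' ∧ u < a + 1 ∧ 3 * s' - b - 1 < 2 * u := by
    have := le_max_left 0 ((3 * s' - b - 1) / 2)
    have := le_max_right 0 ((3 * s' - b - 1) / 2)
    have := max_le hs'0 (by linarith : (3 * s' - b - 1) / 2 ≤ s')
    have := max_lt (by linarith : 0 < a + 1) (by linarith : (3 * s' - b - 1) / 2 < a + 1)
    have := min_le_left s' (a + 1); have := min_le_right s' (a + 1)
    have := le_min hs'0 (by linarith : 0 ≤ a + 1)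
    have := lt_min (by linarith : (3 * s' - b - 1) / 2 < s')
      (by linarith : (3 * s' - b - 1) / 2 < a + 1)
    exact ⟨(max 0 ((3 * s' - b - 1) / 2) + min s' (a + 1)) / 2, by linarith, by linarith,
      by linarith, by linarith⟩
  have hmono : ∀ q ∈ Ioo (0:ℝ) 1 ×ˢ Ioo (0:ℝ) 1,
      0 ≤ q.1 ^ (a - u) * q.2 ^ (b - 3 * s' + 2 * u) := fun q hq => by
    have := hq.1.1; have := hq.2.1; positivity
  refine (isBigO_principal_of_le_mul 1 (fun _ => weight_nonneg a b s') hmono fun q hq => ?_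
    ).setLIntegral_ofReal_lt_top hS hmono
    (lintegral_rpow_mul_rpow_lt_top (by linarith) (by linarith))
  rw [one_mul]
  exact weight_le_rpow_mul_rpow a b hu0 hus hq

lemma lintegral_weight_eq_top {a b s : ℝ} (ha : -1 < a) (hb : -1 < b)
    (h : a + 2 * b + 3 ≤ 3 * s) :
    ∫⁻ q in Ioo (0:ℝ) 1 ×ˢ Ioo (0:ℝ) 1, ENNReal.ofReal (weight a b s q) = ∞ := by
  have hs : 0 ≤ s := by linarith
  have hb1 : 0 < b + 1 := by linarith
  set c : ℝ := 3 ^ (-s) / (b + 1)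
  have hc : 0 < c := by positivity
  -- the cusp `y ≤ x²`, where `phi ≍ x³`, already carries an infinite integral
  have hcusp : ∀ x ∈ Ioo (0:ℝ) 1, ENNReal.ofReal (c * x ^ (a + 2 * b + 2 - 3 * s)) ≤
      ∫⁻ y in Ioo (0:ℝ) 1, ENNReal.ofReal (weight a b s (x, y)) := by
    rintro x ⟨hx0, hx1⟩
    calc ENNReal.ofReal (c * x ^ (a + 2 * b + 2 - 3 * s))
        = ENNReal.ofReal (3 ^ (-s) * x ^ (a - 3 * s)) *
            ENNReal.ofReal ((x ^ 2) ^ (b + 1) / (b + 1)) := by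
          rw [← ENNReal.ofReal_mul (by positivity), ← Real.rpow_natCast, ← Real.rpow_mul hx0.le]
          congr 1
          rw [show a + 2 * b + 2 - 3 * s = (a - 3 * s) + (2:ℕ) * (b + 1) by push_cast; ring,
            Real.rpow_add hx0]
          ring
      _ = ∫⁻ y in Ioc 0 (x ^ 2),
            ENNReal.ofReal (3 ^ (-s) * x ^ (a - 3 * s)) * ENNReal.ofReal (y ^ b) := by
          rw [lintegral_const_mul _ (by fun_prop), lintegral_Ioc_rpow hb (by positivity)]
      _ ≤ ∫⁻ y in Ioc 0 (x ^ 2), ENNReal.ofReal (weight a b s (x, y)) := by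
          refine setLIntegral_mono' measurableSet_Ioc fun y hy => ?_
          rw [← ENNReal.ofReal_mul (by positivity)]
          exact ENNReal.ofReal_le_ofReal (rpow_le_weight_of_le_sq a b hs hx0 hx1.le hy.1 hy.2)
      _ ≤ ∫⁻ y in Ioo (0:ℝ) 1, ENNReal.ofReal (weight a b s (x, y)) :=
          lintegral_mono_set fun y hy => ⟨hy.1, hy.2.trans_lt (by nlinarith)⟩
  have hdiv : ∫⁻ x in Ioo (0:ℝ) 1, ENNReal.ofReal (x ^ (a + 2 * b + 2 - 3 * s)) = ∞ :=
    not_lt_top_iff.1 fun h' => by linarith [lintegral_Ioo_rpow_lt_top_iff.1 h']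
  rw [eq_top_iff, Measure.volume_eq_prod, setLIntegral_prod _ (by fun_prop)]
  calc ∞ = ∫⁻ x in Ioo (0:ℝ) 1, ENNReal.ofReal (c * x ^ (a + 2 * b + 2 - 3 * s)) := by
        simp_rw [ENNReal.ofReal_mul hc.le]
        rw [lintegral_const_mul _ (by fun_prop), hdiv, ENNReal.mul_top (by simpa using hc)]
    _ ≤ _ := setLIntegral_mono' measurableSet_Ioo hcusp

theorem lintegral_weight_lt_top_iff {a b s : ℝ} (ha : -1 < a) (hb : -1 < b) :
    ∫⁻ q in Ioo (0:ℝ) 1 ×ˢ Ioo (0:ℝ) 1, ENNReal.ofReal (weight a b s q) < ∞ ↔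
      3 * s < 2 * a + b + 3 ∧ 3 * s < a + 2 * b + 3 := by
  refine ⟨fun h => ⟨?_, ?_⟩, fun ⟨h₁, h₂⟩ => ?_⟩
  · by_contra! h'
    rw [lintegral_weight_swap, lintegral_weight_eq_top hb ha (by linarith)] at h
    exact lt_irrefl _ h
  · by_contra! h'
    rw [lintegral_weight_eq_top ha hb h'] at h
    exact lt_irrefl _ h
  · rcases lt_or_ge s (b + 1) with hsb | hsa
    · exact lintegral_weight_lt_top ha hb hsb h₁
    · rw [lintegral_weight_swap]
      exact lintegral_weight_lt_top hb ha (by linarith) (by linarith)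

lemma phi_pos_of_mem {q : ℝ × ℝ}
    (hq : q ∈ (Icc (0:ℝ) 1 ×ˢ Icc (0:ℝ) 1) \ {((0:ℝ), (0:ℝ))}) : 0 < phi q := by
  obtain ⟨⟨⟨hu, -⟩, hv, -⟩, hq0⟩ := hq
  have : 0 < q.1 ∨ 0 < q.2 := by
    by_contra! h
    exact hq0 (Prod.ext (le_antisymm h.1 hu) (le_antisymm h.2 hv))
  unfold phi
  rcases this with h | h <;> positivity

lemma mul_phi_le {β γ κ u v : ℝ} (hu : 0 ≤ u) (hv : 0 ≤ v) (h₁ : κ ≤ 4) (h₂ : κ ≤ 2 * β)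
    (h₃ : κ ≤ 2 * γ) : κ * phi (u, v) ≤ 4 * u * v + 2 * β * u ^ 3 + 2 * γ * v ^ 3 := by
  unfold phi; dsimp only
  nlinarith [mul_le_mul_of_nonneg_right h₁ (mul_nonneg hu hv),
    mul_le_mul_of_nonneg_right h₂ (pow_nonneg hu 3),
    mul_le_mul_of_nonneg_right h₃ (pow_nonneg hv 3)]

lemma le_mul_phi {β γ u v : ℝ} (hβ : 0 ≤ β) (hγ : 0 ≤ γ) (hu : 0 ≤ u) (hv : 0 ≤ v) :
    4 * u * v + 2 * β * u ^ 3 + 2 * γ * v ^ 3 ≤ (4 + 2 * β + 2 * γ) * phi (u, v) := by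
  unfold phi; dsimp only
  nlinarith [mul_nonneg hu hv, pow_nonneg hu 3, pow_nonneg hv 3]

lemma sq_mul_add_mul_sq_add_pow_four_le {u v δ : ℝ} (hu : 0 ≤ u) (hv : 0 ≤ v) (huδ : u ≤ δ)
    (hvδ : v ≤ δ) : u ^ 2 * v + u * v ^ 2 + (u + v) ^ 4 ≤ 8 * δ * phi (u, v) := by
  have h₁ : u ^ 2 * v + u * v ^ 2 ≤ 2 * δ * (u * v) := by nlinarith [mul_nonneg hu hv]
  have h₂ : (u + v) ^ 3 ≤ 4 * (u ^ 3 + v ^ 3) := by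
    nlinarith [mul_nonneg (add_nonneg hu hv) (sq_nonneg (u - v))]
  have h₃ : (u + v) ^ 4 ≤ 2 * δ * (u + v) ^ 3 := by
    rw [pow_succ']; gcongr; linarith
  have : 0 ≤ δ * (u * v) := by have := hu.trans huδ; positivity
  unfold phi; dsimp only; nlinarith [hu.trans huδ]

/-- Near the origin the perturbation `ν` is dominated by a small multiple of `phi`, so `μ`
inherits the two-sided bounds of its principal part `4uv + 2βu³ + 2γv³`. -/
lemma isTheta_phi_near {β γ : ℝ} (hβ : 0 < β) (hγ : 0 < γ) {ν μ : ℝ × ℝ → ℝ}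
    (hνO : ∃ C δ : ℝ, 0 < δ ∧ ∀ q ∈ Icc (0:ℝ) 1 ×ˢ Icc (0:ℝ) 1, ‖q‖ < δ →
      |ν q| ≤ C * (q.1 ^ 2 * q.2 + q.1 * q.2 ^ 2 + (q.1 + q.2) ^ 4))
    (hμ : ∀ q : ℝ × ℝ, μ q = 4 * q.1 * q.2 + 2 * β * q.1 ^ 3 + 2 * γ * q.2 ^ 3 + ν q) :
    ∃ δ > 0, μ =Θ[𝓟 (Icc (0:ℝ) 1 ×ˢ Icc (0:ℝ) 1 ∩ {q | ‖q‖ < δ})] phi := by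
  obtain ⟨C, δ, hδ, hν⟩ := hνO
  set κ := min 4 (min (2 * β) (2 * γ))
  have hκ : 0 < κ := lt_min (by norm_num) (lt_min (by linarith) (by linarith))
  set δ' := min δ (κ / (16 * (|C| + 1)))
  have hCδ' : 16 * |C| * δ' ≤ κ := by
    have : δ' * (16 * (|C| + 1)) ≤ κ := (le_div_iff₀ (by positivity)).1 (min_le_right _ _)
    nlinarith [abs_nonneg C]
  refine ⟨δ', lt_min hδ (by positivity),
    isTheta_principal_of_le_of_le (C := 4 + 2 * β + 2 * γ + κ / 2) (half_pos hκ)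
    (fun q hq => by have := hq.1.1.1; have := hq.1.2.1; unfold phi; positivity) ?_⟩
  rintro ⟨u, v⟩ ⟨hq, hqδ⟩
  obtain ⟨⟨hu, -⟩, hv, -⟩ := id hq
  dsimp only at hu hv
  have huδ : u ≤ δ' := (le_abs_self u).trans ((norm_fst_le (u, v)).trans hqδ.le)
  have hvδ : v ≤ δ' := (le_abs_self v).trans ((norm_snd_le (u, v)).trans hqδ.le)
  have hφ : 0 ≤ phi (u, v) := by unfold phi; positivity
  have hνφ : |ν (u, v)| ≤ κ / 2 * phi (u, v) :=
    calc |ν (u, v)| ≤ C * (u ^ 2 * v + u * v ^ 2 + (u + v) ^ 4) :=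
          hν _ hq (hqδ.trans_le (min_le_left _ _))
      _ ≤ |C| * (8 * δ' * phi (u, v)) := by
          gcongr
          · exact le_abs_self C
          · exact sq_mul_add_mul_sq_add_pow_four_le hu hv huδ hvδ
      _ ≤ κ / 2 * phi (u, v) := by nlinarith
  have hP₁ := mul_phi_le (β := β) (γ := γ) hu hv (min_le_left _ _)
    ((min_le_right _ _).trans (min_le_left _ _)) ((min_le_right _ _).trans (min_le_right _ _))
  have hP₂ := le_mul_phi hβ.le hγ.le hu hv
  rw [hμ]
  constructor <;> dsimp only <;> linarith [abs_le.1 hνφ]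

theorem isTheta_phi {β γ : ℝ} (hβ : 0 < β) (hγ : 0 < γ) {ν μ : ℝ × ℝ → ℝ}
    (hνc : ContinuousOn ν (Icc (0:ℝ) 1 ×ˢ Icc (0:ℝ) 1))
    (hνO : ∃ C δ : ℝ, 0 < δ ∧ ∀ q ∈ Icc (0:ℝ) 1 ×ˢ Icc (0:ℝ) 1, ‖q‖ < δ →
      |ν q| ≤ C * (q.1 ^ 2 * q.2 + q.1 * q.2 ^ 2 + (q.1 + q.2) ^ 4))
    (hμ : ∀ q : ℝ × ℝ, μ q = 4 * q.1 * q.2 + 2 * β * q.1 ^ 3 + 2 * γ * q.2 ^ 3 + ν q)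
    (hpos : ∀ q ∈ (Icc (0:ℝ) 1 ×ˢ Icc (0:ℝ) 1) \ {((0:ℝ), (0:ℝ))}, 0 < μ q) :
    μ =Θ[𝓟 (Icc (0:ℝ) 1 ×ˢ Icc (0:ℝ) 1)] phi := by
  obtain ⟨δ, hδ, hnear⟩ := isTheta_phi_near hβ hγ hνO hμ
  set S := Icc (0:ℝ) 1 ×ˢ Icc (0:ℝ) 1 ∩ {q | δ ≤ ‖q‖}
  have hS : IsCompact S :=
    (isCompact_Icc.prod isCompact_Icc).inter_right (isClosed_le continuous_const continuous_norm)
  have hS0 : ∀ q ∈ S, q ∈ (Icc (0:ℝ) 1 ×ˢ Icc (0:ℝ) 1) \ {((0:ℝ), (0:ℝ))} := fun q hq =>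
    ⟨hq.1, fun h => by rw [mem_singleton_iff.1 h] at hq; simpa using hδ.trans_le hq.2⟩
  have hμc : ContinuousOn μ S := by
    rw [show μ = _ from funext hμ]
    exact (by fun_prop : Continuous fun q : ℝ × ℝ => 4 * q.1 * q.2 + 2 * β * q.1 ^ 3 +
      2 * γ * q.2 ^ 3).continuousOn.add (hνc.mono inter_subset_left)
  have hfar : μ =Θ[𝓟 S] phi :=
    (hμc.isTheta_principal hS (c := (1:ℝ)) (by norm_num) fun q hq =>
      (hpos q (hS0 q hq)).ne').trans
    (continuous_phi.continuousOn.isTheta_principal hS (c := (1:ℝ)) (by norm_num) fun q hq =>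
      (phi_pos_of_mem (hS0 q hq)).ne').symm
  refine (hnear.sup hfar).mono ?_
  rw [sup_principal, principal_mono]
  intro q hq
  rcases lt_or_ge ‖q‖ δ with h | h
  exacts [Or.inl ⟨hq, h⟩, Or.inr ⟨hq, h⟩]

lemma abs_pow_mul_pow_div_pow_rpow_mul {x y w : ℝ} (hx : 0 ≤ x) (hy : 0 ≤ y) (hw : 0 < w)
    (m n ℓ : ℕ) (p : ℝ) :
    |x ^ m * y ^ n / w ^ ℓ| ^ p * w =
      x ^ ((m : ℝ) * p) * y ^ ((n : ℝ) * p) * w ^ (-((ℓ : ℝ) * p - 1)) := by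
  rw [abs_of_nonneg (by positivity), Real.div_rpow (by positivity) (by positivity),
    Real.mul_rpow (by positivity) (by positivity), ← Real.rpow_natCast, ← Real.rpow_natCast,
    ← Real.rpow_natCast, ← Real.rpow_mul hx, ← Real.rpow_mul hy, ← Real.rpow_mul hw.le,
    neg_sub, Real.rpow_sub hw, Real.rpow_one]
  ring

lemma isTheta_weight {μ : ℝ × ℝ → ℝ} (hμ : μ =Θ[𝓟 (Ioo (0:ℝ) 1 ×ˢ Ioo (0:ℝ) 1)] phi)
    (hμ0 : ∀ q ∈ Ioo (0:ℝ) 1 ×ˢ Ioo (0:ℝ) 1, 0 < μ q) (m n ℓ : ℕ) (p : ℝ) :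
    (fun q : ℝ × ℝ => |q.1 ^ m * q.2 ^ n / μ q ^ ℓ| ^ p * μ q) =Θ[𝓟 (Ioo (0:ℝ) 1 ×ˢ Ioo (0:ℝ) 1)]
      weight (m * p) (n * p) (ℓ * p - 1) :=
  EventuallyEq.trans_isTheta (eventually_principal.2 fun q hq =>
    abs_pow_mul_pow_div_pow_rpow_mul hq.1.1.le hq.2.1.le (hμ0 q hq) m n ℓ p) <|
    (isTheta_refl _ _).mul <| hμ.rpow (eventually_principal.2 fun q hq => (hμ0 q hq).le)
      (eventually_principal.2 fun _ hq => (phi_pos hq.1.1 hq.2.1).le)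

lemma exponent_conditions_iff (m n ℓ : ℕ) {p : ℝ} (hp : 0 < p) :
    (3 * (ℓ * p - 1) < 2 * (m * p) + n * p + 3 ∧ 3 * (ℓ * p - 1) < m * p + 2 * (n * p) + 3) ↔
      (m : ℝ) + n + min m n > 3 * ℓ - 6 / p := by
  have key : ∀ t : ℝ, 3 * ℓ - 6 / p < t ↔ 3 * (ℓ * p - 1) < t * p + 3 := fun t => by
    rw [← mul_lt_mul_iff_of_pos_right hp, sub_mul, div_mul_cancel₀ _ hp.ne']
    constructor <;> intro <;> linarith
  rw [gt_iff_lt, Nat.cast_min, ← min_add_add_left, lt_min_iff, key, key]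
  constructor <;> rintro ⟨h₁, h₂⟩ <;> constructor <;> linarith

/-- Lemma int: for `M(u,v) = u^m v^n / μ(u,v)^ℓ` on `Σ* = [0,1]² \ {(0,0)}`, where
`μ = 4uv + 2βu³ + 2γv³ + ν` with `β, γ > 0`, `ν = O(u²v + uv² + (u+v)⁴)` near the
origin, `ν` continuous and `μ > 0` on `Σ*`, one has
`∫_Σ |M|^p μ < ∞  ↔  m + n + min{m,n} > 3ℓ − 6/p`. -/
theorem stmt10 (β γ : ℝ) (hβ : 0 < β) (hγ : 0 < γ) (ν μ : ℝ × ℝ → ℝ)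
    (hνc : ContinuousOn ν (Icc (0:ℝ) 1 ×ˢ Icc (0:ℝ) 1))
    (hνO : ∃ C δ : ℝ, 0 < δ ∧ ∀ q ∈ Icc (0:ℝ) 1 ×ˢ Icc (0:ℝ) 1, ‖q‖ < δ →
      |ν q| ≤ C * (q.1 ^ 2 * q.2 + q.1 * q.2 ^ 2 + (q.1 + q.2) ^ 4))
    (hμ : ∀ q : ℝ × ℝ, μ q = 4 * q.1 * q.2 + 2 * β * q.1 ^ 3 + 2 * γ * q.2 ^ 3 + ν q)
    (hpos : ∀ q ∈ (Icc (0:ℝ) 1 ×ˢ Icc (0:ℝ) 1) \ {((0:ℝ), (0:ℝ))}, 0 < μ q)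
    (m n ℓ : ℕ) (p : ℝ) (hp : 1 ≤ p) :
    (∫⁻ q in Icc (0:ℝ) 1 ×ˢ Icc (0:ℝ) 1,
        ENNReal.ofReal (|q.1 ^ m * q.2 ^ n / μ q ^ ℓ| ^ p * μ q)) < ⊤ ↔
      (m : ℝ) + n + min m n > 3 * ℓ - 6 / p := by
  set U := Ioo (0:ℝ) 1 ×ˢ Ioo (0:ℝ) 1
  have hp0 : 0 < p := by linarith
  have hUQ : U ⊆ Icc (0:ℝ) 1 ×ˢ Icc (0:ℝ) 1 := prod_mono Ioo_subset_Icc_self Ioo_subset_Icc_self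
  have hμU : ∀ q ∈ U, 0 < μ q := fun q hq =>
    hpos q ⟨hUQ hq, fun h => by rw [mem_singleton_iff.1 h] at hq; exact lt_irrefl _ hq.1.1⟩
  have hF := isTheta_weight ((isTheta_phi hβ hγ hνc hνO hμ hpos).mono (principal_mono.2 hUQ))
    hμU m n ℓ p
  have hae : U =ᵐ[volume] Icc (0:ℝ) 1 ×ˢ Icc (0:ℝ) 1 := by
    rw [Measure.volume_eq_prod]; exact Measure.set_prod_ae_eq Ioo_ae_eq_Icc Ioo_ae_eq_Icc
  rw [← setLIntegral_congr hae,
    hF.setLIntegral_ofReal_lt_top_iff (measurableSet_Ioo.prod measurableSet_Ioo)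
      (fun q hq => by have := hμU q hq; positivity) fun _ => weight_nonneg _ _ _,
    lintegral_weight_lt_top_iff (neg_one_lt_zero.trans_le (by positivity))
      (neg_one_lt_zero.trans_le (by positivity))]
  exact exponent_conditions_iff m n ℓ hp0
end

section
/- Let μ > 0 on Σ* = [0,1]² \ {(0,0)} be as in the Jacobian lemma (μ = 4uv + 2βu³ + 2γv³ + O(u²v+uv²+(u+v)⁴) with β, γ > 0), let ℓ ∈ ℕ, r ∈ ℕ, and let P be a polynomial all of whose monomial coefficients P_{jk} with weight w(j,k) := j + k + min{j,k} ≤ r vanish. Then for every p ∈ [6/(3ℓ−r), 6/(3ℓ−1−r)), the function μ^{−ℓ}P lies in the weighted Lebesgue space L^p(Σ, μ), i.e. ∫_Σ |μ^{−ℓ}P|^p μ < ∞. -/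
/-! On `[0,1]²` the density `μ` is comparable to `leadForm q = uv + u³ + v³`: near the origin
`|ν| ≤ C (u²v + uv² + (u+v)⁴) ≤ 8C‖q‖ · leadForm q` is absorbed by the principal part, and away
from it both functions are continuous and positive on a compact set. Since `uv` and `u³`, `v³` are
each at most `leadForm`, a monomial of weight `w(j,k)` is `≤ leadForm^{w/3}`, so the vanishing of
all coefficients of weight `≤ r` gives `|P| ≲ leadForm^{(r+1)/3}` and
`|μ^{-ℓ}P|^p μ ≲ leadForm^e` with `e = ((r+1)/3 - ℓ)p + 1 > -1`. Finally
`uv ≤ leadForm ≤ 3` bounds this by a multiple of `(uv)^{min e 0}`, which is integrable. -/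

open MeasureTheory Set

def leadForm (q : ℝ × ℝ) : ℝ := q.1 * q.2 + q.1 ^ 3 + q.2 ^ 3

section leadForm

variable {q : ℝ × ℝ}

lemma leadForm_nonneg (hu : 0 ≤ q.1) (hv : 0 ≤ q.2) : 0 ≤ leadForm q := by
  unfold leadForm; positivity

lemma mul_le_leadForm (hu : 0 ≤ q.1) (hv : 0 ≤ q.2) : q.1 * q.2 ≤ leadForm q := by
  unfold leadForm; nlinarith [pow_nonneg hu 3, pow_nonneg hv 3]

lemma fst_pow_three_le_leadForm (hu : 0 ≤ q.1) (hv : 0 ≤ q.2) : q.1 ^ 3 ≤ leadForm q := by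
  unfold leadForm; nlinarith [mul_nonneg hu hv, pow_nonneg hv 3]

lemma snd_pow_three_le_leadForm (hu : 0 ≤ q.1) (hv : 0 ≤ q.2) : q.2 ^ 3 ≤ leadForm q := by
  unfold leadForm; nlinarith [mul_nonneg hu hv, pow_nonneg hu 3]

lemma norm_pow_three_le_leadForm (hu : 0 ≤ q.1) (hv : 0 ≤ q.2) : ‖q‖ ^ 3 ≤ leadForm q := by
  rw [Prod.norm_def, Real.norm_of_nonneg hu, Real.norm_of_nonneg hv]
  rcases le_total q.1 q.2 with h | h
  · rw [max_eq_right h]; exact snd_pow_three_le_leadForm hu hv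
  · rw [max_eq_left h]; exact fst_pow_three_le_leadForm hu hv

lemma error_le_norm_mul_leadForm (hu : 0 ≤ q.1) (hv : 0 ≤ q.2) :
    q.1 ^ 2 * q.2 + q.1 * q.2 ^ 2 + (q.1 + q.2) ^ 4 ≤ 8 * ‖q‖ * leadForm q := by
  rw [Prod.norm_def, Real.norm_of_nonneg hu, Real.norm_of_nonneg hv]
  have h4 : (q.1 + q.2) ^ 4 ≤ 8 * (q.1 ^ 4 + q.2 ^ 4) := by
    nlinarith [sq_nonneg (q.1 - q.2), sq_nonneg (q.1 + q.2), mul_nonneg hu hv,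
      mul_nonneg (sq_nonneg (q.1 - q.2)) (mul_nonneg hu hv)]
  unfold leadForm
  rcases le_total q.1 q.2 with h | h
  · rw [max_eq_right h]
    nlinarith [mul_le_mul_of_nonneg_right h (mul_nonneg hu hv),
      mul_le_mul_of_nonneg_right h (pow_nonneg hu 3), mul_nonneg hu hv, pow_nonneg hv 3]
  · rw [max_eq_left h]
    nlinarith [mul_le_mul_of_nonneg_right h (mul_nonneg hu hv),
      mul_le_mul_of_nonneg_right h (pow_nonneg hv 3), mul_nonneg hu hv, pow_nonneg hu 3]

end leadForm

lemma leadForm_le_three {q : ℝ × ℝ} (hq : q ∈ Icc (0:ℝ) 1 ×ˢ Icc (0:ℝ) 1) :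
    leadForm q ≤ 3 := by
  obtain ⟨⟨hu, hu1⟩, hv, hv1⟩ := hq
  have := mul_le_one₀ hu1 hv hv1
  have := pow_le_one₀ hu hu1 (n := 3)
  have := pow_le_one₀ hv hv1 (n := 3)
  unfold leadForm; linarith

lemma IsCompact.exists_pos_mul_le {X : Type*} [TopologicalSpace X] {K : Set X}
    (hK : IsCompact K) {f g : X → ℝ} (hf : ContinuousOn f K) (hg : ContinuousOn g K)
    (hfpos : ∀ x ∈ K, 0 < f x) : ∃ c > 0, ∀ x ∈ K, c * g x ≤ f x := by
  rcases K.eq_empty_or_nonempty with rfl | hne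
  · exact ⟨1, one_pos, by simp⟩
  obtain ⟨x₀, hx₀, hmin⟩ := hK.exists_isMinOn hne hf
  obtain ⟨B, hB⟩ := hK.exists_bound_of_continuousOn hg
  have hf₀ := hfpos x₀ hx₀
  refine ⟨f x₀ / (|B| + 1), by positivity, fun x hx => ?_⟩
  have hgB : g x ≤ |B| + 1 := by
    have := (Real.norm_eq_abs _ ▸ hB x hx).trans (le_abs_self B)
    linarith [le_abs_self (g x)]
  calc f x₀ / (|B| + 1) * g x ≤ f x₀ / (|B| + 1) * (|B| + 1) := by gcongr
    _ = f x₀ := by field_simp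
    _ ≤ f x := hmin hx

lemma exists_abs_le_mul_leadForm {ν : ℝ × ℝ → ℝ}
    (hνO : ∃ C δ : ℝ, 0 < δ ∧ ∀ q ∈ Icc (0:ℝ) 1 ×ˢ Icc (0:ℝ) 1, ‖q‖ < δ →
      |ν q| ≤ C * (q.1 ^ 2 * q.2 + q.1 * q.2 ^ 2 + (q.1 + q.2) ^ 4))
    {ε : ℝ} (hε : 0 < ε) :
    ∃ δ > 0, ∀ q ∈ Icc (0:ℝ) 1 ×ˢ Icc (0:ℝ) 1, ‖q‖ < δ → |ν q| ≤ ε * leadForm q := by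
  obtain ⟨C, δ, hδ, hC⟩ := hνO
  set C' := max C 1
  have hC' : 0 < C' := lt_max_of_lt_right one_pos
  refine ⟨min δ (ε / (8 * C')), lt_min hδ (by positivity), fun q hq hqδ => ?_⟩
  have hu : 0 ≤ q.1 := hq.1.1
  have hv : 0 ≤ q.2 := hq.2.1
  have hqε : 8 * C' * ‖q‖ ≤ ε := by
    have := (lt_min_iff.1 hqδ).2
    rw [lt_div_iff₀ (by positivity)] at this
    linarith
  calc |ν q| ≤ C * (q.1 ^ 2 * q.2 + q.1 * q.2 ^ 2 + (q.1 + q.2) ^ 4) :=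
        hC q hq (lt_min_iff.1 hqδ).1
    _ ≤ C' * (8 * ‖q‖ * leadForm q) := by
        gcongr
        · exact le_max_left _ _
        · exact error_le_norm_mul_leadForm hu hv
    _ = 8 * C' * ‖q‖ * leadForm q := by ring
    _ ≤ ε * leadForm q := by gcongr; exact leadForm_nonneg hu hv

lemma exists_leadForm_comparable_near_origin {β γ : ℝ} (hβ : 0 < β) (hγ : 0 < γ)
    {ν μ : ℝ × ℝ → ℝ}
    (hνO : ∃ C δ : ℝ, 0 < δ ∧ ∀ q ∈ Icc (0:ℝ) 1 ×ˢ Icc (0:ℝ) 1, ‖q‖ < δ →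
      |ν q| ≤ C * (q.1 ^ 2 * q.2 + q.1 * q.2 ^ 2 + (q.1 + q.2) ^ 4))
    (hμ : ∀ q : ℝ × ℝ, μ q = 4 * q.1 * q.2 + 2 * β * q.1 ^ 3 + 2 * γ * q.2 ^ 3 + ν q) :
    ∃ δ > 0, ∃ c₁ > 0, ∃ c₂ > 0, ∀ q ∈ Icc (0:ℝ) 1 ×ˢ Icc (0:ℝ) 1, ‖q‖ < δ →
      c₁ * leadForm q ≤ μ q ∧ μ q ≤ c₂ * leadForm q := by
  set c := min 4 (min (2 * β) (2 * γ))
  have hc : 0 < c := lt_min (by norm_num) (lt_min (by linarith) (by linarith))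
  have hc4 : c ≤ 4 := min_le_left _ _
  have hcβ : c ≤ 2 * β := (min_le_right _ _).trans (min_le_left _ _)
  have hcγ : c ≤ 2 * γ := (min_le_right _ _).trans (min_le_right _ _)
  obtain ⟨δ, hδ, hν⟩ := exists_abs_le_mul_leadForm hνO (half_pos hc)
  refine ⟨δ, hδ, c / 2, half_pos hc, 4 + 2 * β + 2 * γ + c / 2, by positivity,
    fun q hq hqδ => ?_⟩
  have hu : 0 ≤ q.1 := hq.1.1
  have hv : 0 ≤ q.2 := hq.2.1
  have huv := mul_nonneg hu hv
  have hu3 := pow_nonneg hu 3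
  have hv3 := pow_nonneg hv 3
  obtain ⟨hνl, hνu⟩ := abs_le.1 (hν q hq hqδ)
  rw [hμ q]
  unfold leadForm at hνl hνu ⊢
  constructor
  · nlinarith [mul_le_mul_of_nonneg_right hc4 huv, mul_le_mul_of_nonneg_right hcβ hu3,
      mul_le_mul_of_nonneg_right hcγ hv3]
  · nlinarith [mul_le_mul_of_nonneg_left hβ.le (add_nonneg huv hv3),
      mul_le_mul_of_nonneg_left hγ.le (add_nonneg huv hu3),
      mul_le_mul_of_nonneg_left (by norm_num : (0:ℝ) ≤ 4) (add_nonneg hu3 hv3)]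

lemma exists_leadForm_comparable_away_from_origin {μ : ℝ × ℝ → ℝ}
    (hμc : ContinuousOn μ (Icc (0:ℝ) 1 ×ˢ Icc (0:ℝ) 1))
    (hpos : ∀ q ∈ (Icc (0:ℝ) 1 ×ˢ Icc (0:ℝ) 1) \ {((0:ℝ), (0:ℝ))}, 0 < μ q)
    {δ : ℝ} (hδ : 0 < δ) :
    ∃ c₁ > 0, ∃ c₂ > 0, ∀ q ∈ Icc (0:ℝ) 1 ×ˢ Icc (0:ℝ) 1, δ ≤ ‖q‖ →
      c₁ * leadForm q ≤ μ q ∧ μ q ≤ c₂ * leadForm q := by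
  set K := (Icc (0:ℝ) 1 ×ˢ Icc (0:ℝ) 1) ∩ {q | δ ≤ ‖q‖}
  have hK : IsCompact K :=
    (isCompact_Icc.prod isCompact_Icc).inter_right (isClosed_le continuous_const continuous_norm)
  have hmc : ContinuousOn leadForm K := by unfold leadForm; fun_prop
  have hμpos : ∀ q ∈ K, 0 < μ q := fun q hq => hpos q ⟨hq.1, fun h0 => by
    have hqδ : δ ≤ ‖q‖ := hq.2
    rw [mem_singleton_iff.1 h0, Prod.mk_zero_zero, norm_zero] at hqδ
    linarith⟩
  have hmpos : ∀ q ∈ K, 0 < leadForm q := fun q hq =>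
    (pow_pos (hδ.trans_le hq.2) 3).trans_le (norm_pow_three_le_leadForm hq.1.1.1 hq.1.2.1)
  obtain ⟨c₁, hc₁, h₁⟩ := hK.exists_pos_mul_le (hμc.mono inter_subset_left) hmc hμpos
  obtain ⟨c, hc, h₂⟩ := hK.exists_pos_mul_le hmc (hμc.mono inter_subset_left) hmpos
  refine ⟨c₁, hc₁, c⁻¹, inv_pos.2 hc, fun q hq hqδ => ⟨h₁ q ⟨hq, hqδ⟩, ?_⟩⟩
  rw [← div_eq_inv_mul, le_div_iff₀' hc]
  exact h₂ q ⟨hq, hqδ⟩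

lemma exists_leadForm_comparable {β γ : ℝ} (hβ : 0 < β) (hγ : 0 < γ) {ν μ : ℝ × ℝ → ℝ}
    (hνc : ContinuousOn ν (Icc (0:ℝ) 1 ×ˢ Icc (0:ℝ) 1))
    (hνO : ∃ C δ : ℝ, 0 < δ ∧ ∀ q ∈ Icc (0:ℝ) 1 ×ˢ Icc (0:ℝ) 1, ‖q‖ < δ →
      |ν q| ≤ C * (q.1 ^ 2 * q.2 + q.1 * q.2 ^ 2 + (q.1 + q.2) ^ 4))
    (hμ : ∀ q : ℝ × ℝ, μ q = 4 * q.1 * q.2 + 2 * β * q.1 ^ 3 + 2 * γ * q.2 ^ 3 + ν q)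
    (hpos : ∀ q ∈ (Icc (0:ℝ) 1 ×ˢ Icc (0:ℝ) 1) \ {((0:ℝ), (0:ℝ))}, 0 < μ q) :
    ∃ c₁ > 0, ∃ c₂ > 0, ∀ q ∈ Icc (0:ℝ) 1 ×ˢ Icc (0:ℝ) 1,
      c₁ * leadForm q ≤ μ q ∧ μ q ≤ c₂ * leadForm q := by
  have hμc : ContinuousOn μ (Icc (0:ℝ) 1 ×ˢ Icc (0:ℝ) 1) := by
    rw [show μ = fun q => 4 * q.1 * q.2 + 2 * β * q.1 ^ 3 + 2 * γ * q.2 ^ 3 + ν q from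
      funext hμ]
    fun_prop
  obtain ⟨δ, hδ, a₁, ha₁, a₂, ha₂, hnear⟩ :=
    exists_leadForm_comparable_near_origin hβ hγ hνO hμ
  obtain ⟨b₁, hb₁, b₂, hb₂, haway⟩ := exists_leadForm_comparable_away_from_origin hμc hpos hδ
  refine ⟨min a₁ b₁, lt_min ha₁ hb₁, max a₂ b₂, lt_max_of_lt_left ha₂, fun q hq => ?_⟩
  have hm := leadForm_nonneg hq.1.1 hq.2.1
  obtain ⟨hlow, hhigh⟩ | ⟨hlow, hhigh⟩ :=
    (lt_or_ge ‖q‖ δ).imp (hnear q hq) (haway q hq)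
  · exact ⟨(mul_le_mul_of_nonneg_right (min_le_left _ _) hm).trans hlow,
      hhigh.trans (mul_le_mul_of_nonneg_right (le_max_left _ _) hm)⟩
  · exact ⟨(mul_le_mul_of_nonneg_right (min_le_right _ _) hm).trans hlow,
      hhigh.trans (mul_le_mul_of_nonneg_right (le_max_right _ _) hm)⟩

lemma pow_le_rpow_of_pow_three_le {x m : ℝ} (hx : 0 ≤ x) (h : x ^ 3 ≤ m) (n : ℕ) :
    x ^ n ≤ m ^ ((n : ℝ) / 3) := by
  calc x ^ n = (x ^ 3) ^ ((n : ℝ) / 3) := by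
        rw [← Real.rpow_natCast x 3, ← Real.rpow_mul hx, ← Real.rpow_natCast]
        congr 1; push_cast; ring
    _ ≤ m ^ ((n : ℝ) / 3) := by gcongr

lemma monomial_le_leadForm_rpow {q : ℝ × ℝ} (hu : 0 ≤ q.1) (hv : 0 ≤ q.2) (j k : ℕ) :
    q.1 ^ j * q.2 ^ k ≤ leadForm q ^ (((j + k + min j k : ℕ) : ℝ) / 3) := by
  obtain ⟨j', hj⟩ := Nat.exists_eq_add_of_le (min_le_left j k)
  obtain ⟨k', hk⟩ := Nat.exists_eq_add_of_le (min_le_right j k)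
  generalize min j k = a at hj hk ⊢
  subst hj hk
  have hm := leadForm_nonneg hu hv
  calc q.1 ^ (a + j') * q.2 ^ (a + k') = (q.1 * q.2) ^ a * (q.1 ^ j' * q.2 ^ k') := by ring
    _ ≤ leadForm q ^ (a : ℝ) * (leadForm q ^ ((j' : ℝ) / 3) * leadForm q ^ ((k' : ℝ) / 3)) := by
        rw [Real.rpow_natCast]
        gcongr
        · exact mul_le_leadForm hu hv
        · exact pow_le_rpow_of_pow_three_le hu (fst_pow_three_le_leadForm hu hv) j'
        · exact pow_le_rpow_of_pow_three_le hv (snd_pow_three_le_leadForm hu hv) k'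
    _ = leadForm q ^ (((a + j' + (a + k') + a : ℕ) : ℝ) / 3) := by
        rw [← Real.rpow_add_of_nonneg hm (by positivity) (by positivity),
          ← Real.rpow_add_of_nonneg hm (by positivity) (by positivity)]
        congr 1; push_cast; ring

lemma monomial_le_leadForm_rpow_of_lt_weight {q : ℝ × ℝ}
    (hq : q ∈ Icc (0:ℝ) 1 ×ˢ Icc (0:ℝ) 1) {j k r : ℕ} (hw : r < j + k + min j k) :
    q.1 ^ j * q.2 ^ k ≤ 3 ^ (j + k + min j k) * leadForm q ^ (((r : ℝ) + 1) / 3) := by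
  set w := j + k + min j k
  have hm := leadForm_nonneg hq.1.1 hq.2.1
  have hrw : (r : ℝ) + 1 ≤ w := by exact_mod_cast hw
  calc q.1 ^ j * q.2 ^ k ≤ leadForm q ^ ((w : ℝ) / 3) :=
        monomial_le_leadForm_rpow hq.1.1 hq.2.1 j k
    _ = leadForm q ^ (((w : ℝ) - (r + 1)) / 3) * leadForm q ^ (((r : ℝ) + 1) / 3) := by
        rw [← Real.rpow_add_of_nonneg hm (by linarith) (by positivity)]
        ring_nf
    _ ≤ (3 : ℝ) ^ (w : ℝ) * leadForm q ^ (((r : ℝ) + 1) / 3) := by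
        gcongr
        calc leadForm q ^ (((w : ℝ) - (r + 1)) / 3) ≤ 3 ^ (((w : ℝ) - (r + 1)) / 3) :=
              Real.rpow_le_rpow hm (leadForm_le_three hq) (by linarith)
          _ ≤ 3 ^ (w : ℝ) := Real.rpow_le_rpow_of_exponent_le (by norm_num) (by linarith)
    _ = 3 ^ w * leadForm q ^ (((r : ℝ) + 1) / 3) := by rw [Real.rpow_natCast]

lemma abs_poly_le_leadForm_rpow {P : ℕ → ℕ → ℝ} {r : ℕ}
    (hP : ∀ j k, j + k + min j k ≤ r → P j k = 0) (s t : Finset ℕ) {q : ℝ × ℝ}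
    (hq : q ∈ Icc (0:ℝ) 1 ×ˢ Icc (0:ℝ) 1) :
    |∑ j ∈ s, ∑ k ∈ t, P j k * q.1 ^ j * q.2 ^ k| ≤
      (∑ j ∈ s, ∑ k ∈ t, |P j k| * 3 ^ (j + k + min j k)) *
        leadForm q ^ (((r : ℝ) + 1) / 3) := by
  simp only [Finset.sum_mul]
  refine (Finset.abs_sum_le_sum_abs _ _).trans (Finset.sum_le_sum fun j _ => ?_)
  refine (Finset.abs_sum_le_sum_abs _ _).trans (Finset.sum_le_sum fun k _ => ?_)
  rcases le_or_gt (j + k + min j k) r with hw | hw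
  · simp [hP j k hw]
  · have hmono : 0 ≤ q.1 ^ j * q.2 ^ k := mul_nonneg (pow_nonneg hq.1.1 j) (pow_nonneg hq.2.1 k)
    rw [mul_assoc, abs_mul, abs_of_nonneg hmono, mul_assoc]
    exact mul_le_mul_of_nonneg_left (monomial_le_leadForm_rpow_of_lt_weight hq hw)
      (abs_nonneg _)

lemma rpow_abs_div_pow_mul_le {x y m A c₁ c₂ s p : ℝ} (ℓ : ℕ) (hm : 0 < m) (hc₁ : 0 < c₁)
    (hp : 0 ≤ p) (hlow : c₁ * m ≤ y) (hhigh : y ≤ c₂ * m) (hx : |x| ≤ A * m ^ s) :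
    |x / y ^ ℓ| ^ p * y ≤ (A / c₁ ^ ℓ) ^ p * c₂ * m ^ ((s - ℓ) * p + 1) := by
  have hy : 0 < y := (mul_pos hc₁ hm).trans_le hlow
  have hA : 0 ≤ A := nonneg_of_mul_nonneg_left ((abs_nonneg x).trans hx) (by positivity)
  have hbase : |x / y ^ ℓ| ≤ A / c₁ ^ ℓ * m ^ (s - ℓ) := by
    rw [abs_div, abs_of_pos (pow_pos hy ℓ), Real.rpow_sub hm, Real.rpow_natCast]
    calc |x| / y ^ ℓ ≤ A * m ^ s / (c₁ * m) ^ ℓ := by gcongr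
      _ = A / c₁ ^ ℓ * (m ^ s / m ^ ℓ) := by rw [mul_pow]; field_simp
  calc |x / y ^ ℓ| ^ p * y ≤ (A / c₁ ^ ℓ * m ^ (s - ℓ)) ^ p * (c₂ * m) := by gcongr
    _ = (A / c₁ ^ ℓ) ^ p * c₂ * m ^ ((s - ℓ) * p + 1) := by
        rw [Real.mul_rpow (by positivity) (by positivity), ← Real.rpow_mul hm.le,
          Real.rpow_add_one hm.ne']
        ring

lemma rpow_le_rpow_max_mul_rpow_min {x y b : ℝ} (e : ℝ) (hx : 0 < x) (hxy : x ≤ y)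
    (hyb : y ≤ b) : y ^ e ≤ b ^ max e 0 * x ^ min e 0 := by
  rcases le_total 0 e with he | he
  · rw [max_eq_left he, min_eq_right he, Real.rpow_zero, mul_one]
    exact Real.rpow_le_rpow (hx.le.trans hxy) hyb he
  · rw [max_eq_right he, min_eq_left he, Real.rpow_zero, one_mul]
    exact Real.rpow_le_rpow_of_nonpos hx hxy he

lemma integrableOn_rpow_mul_rpow_Ioo {t : ℝ} (ht : -1 < t) :
    IntegrableOn (fun q : ℝ × ℝ => q.1 ^ t * q.2 ^ t) (Ioo (0:ℝ) 1 ×ˢ Ioo (0:ℝ) 1) := by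
  have h := (intervalIntegral.integrableOn_Ioo_rpow_iff one_pos).2 ht
  have := h.mul_prod h
  rwa [Measure.prod_restrict, ← Measure.volume_eq_prod] at this

lemma setLIntegral_unitSquare_lt_top_of_le {f : ℝ × ℝ → ℝ} {C t : ℝ} (ht : -1 < t)
    (hf : ∀ q ∈ Ioo (0:ℝ) 1 ×ˢ Ioo (0:ℝ) 1, f q ≤ C * (q.1 * q.2) ^ t) :
    ∫⁻ q in Icc (0:ℝ) 1 ×ˢ Icc (0:ℝ) 1, ENNReal.ofReal (f q) < ⊤ := by
  -- The axes are null, and off them `(uv)^t` is not a junk value of `rpow`.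
  have hsquare : (Icc (0:ℝ) 1 ×ˢ Icc (0:ℝ) 1 : Set (ℝ × ℝ)) =ᵐ[volume]
      Ioo (0:ℝ) 1 ×ˢ Ioo (0:ℝ) 1 := by
    rw [Measure.volume_eq_prod]
    exact (Measure.set_prod_ae_eq Ioo_ae_eq_Icc Ioo_ae_eq_Icc).symm
  have hbound : IntegrableOn (fun q : ℝ × ℝ => C * (q.1 ^ t * q.2 ^ t))
      (Ioo (0:ℝ) 1 ×ˢ Ioo (0:ℝ) 1) :=
    (integrableOn_rpow_mul_rpow_Ioo ht).const_mul C
  rw [setLIntegral_congr hsquare]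
  refine lt_of_le_of_lt (setLIntegral_mono' (measurableSet_Ioo.prod measurableSet_Ioo)
    fun q hq => ENNReal.ofReal_le_ofReal ?_) hbound.setLIntegral_lt_top
  rw [← Real.mul_rpow hq.1.1.le hq.2.1.le]
  exact hf q hq

theorem stmt19_general (β γ : ℝ) (hβ : 0 < β) (hγ : 0 < γ) (ν μ : ℝ × ℝ → ℝ)
    (hνc : ContinuousOn ν (Icc (0:ℝ) 1 ×ˢ Icc (0:ℝ) 1))
    (hνO : ∃ C δ : ℝ, 0 < δ ∧ ∀ q ∈ Icc (0:ℝ) 1 ×ˢ Icc (0:ℝ) 1, ‖q‖ < δ →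
      |ν q| ≤ C * (q.1 ^ 2 * q.2 + q.1 * q.2 ^ 2 + (q.1 + q.2) ^ 4))
    (hμ : ∀ q : ℝ × ℝ, μ q = 4 * q.1 * q.2 + 2 * β * q.1 ^ 3 + 2 * γ * q.2 ^ 3 + ν q)
    (hpos : ∀ q ∈ (Icc (0:ℝ) 1 ×ˢ Icc (0:ℝ) 1) \ {((0:ℝ), (0:ℝ))}, 0 < μ q)
    (ℓ r D : ℕ) (P : ℕ → ℕ → ℝ)
    (hP : ∀ j k, j + k + min j k ≤ r → P j k = 0)
    (p : ℝ) (hp : 1 ≤ p)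
    (hpu : 3 * ℓ - 6 / p < r + 1) :
    (∫⁻ q in Icc (0:ℝ) 1 ×ˢ Icc (0:ℝ) 1,
      ENNReal.ofReal
        (|(∑ j ∈ Finset.range (D + 1), ∑ k ∈ Finset.range (D + 1),
            P j k * q.1 ^ j * q.2 ^ k) / μ q ^ ℓ| ^ p * μ q)) < ⊤ := by
  obtain ⟨c₁, hc₁, c₂, hc₂, hcomp⟩ := exists_leadForm_comparable hβ hγ hνc hνO hμ hpos
  have hp0 : 0 < p := one_pos.trans_le hp
  have he : -1 < (((r : ℝ) + 1) / 3 - ℓ) * p + 1 := by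
    have h6 : (3 * ℓ - (r + 1)) * p < 6 := by rw [← lt_div_iff₀ hp0]; linarith
    linarith
  set e := (((r : ℝ) + 1) / 3 - ℓ) * p + 1
  set A := ∑ j ∈ Finset.range (D + 1), ∑ k ∈ Finset.range (D + 1),
    |P j k| * 3 ^ (j + k + min j k)
  refine setLIntegral_unitSquare_lt_top_of_le (C := (A / c₁ ^ ℓ) ^ p * c₂ * 3 ^ max e 0)
    (t := min e 0) (lt_min he (by norm_num)) fun q hq => ?_
  have hq' : q ∈ Icc (0:ℝ) 1 ×ˢ Icc (0:ℝ) 1 := ⟨Ioo_subset_Icc_self hq.1, Ioo_subset_Icc_self hq.2⟩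
  have huv : 0 < q.1 * q.2 := mul_pos hq.1.1 hq.2.1
  have huv_le : q.1 * q.2 ≤ leadForm q := mul_le_leadForm hq'.1.1 hq'.2.1
  calc _ ≤ (A / c₁ ^ ℓ) ^ p * c₂ * leadForm q ^ e :=
        rpow_abs_div_pow_mul_le ℓ (huv.trans_le huv_le) hc₁ hp0.le (hcomp q hq').1
          (hcomp q hq').2 (abs_poly_le_leadForm_rpow hP _ _ hq')
    _ ≤ (A / c₁ ^ ℓ) ^ p * c₂ * (3 ^ max e 0 * (q.1 * q.2) ^ min e 0) := by
        refine mul_le_mul_of_nonneg_left ?_ (by positivity)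
        exact rpow_le_rpow_max_mul_rpow_min e huv huv_le (leadForm_le_three hq')
    _ = _ := by ring

/-- Part a) of the leading-part lemma: with `μ = 4uv + 2βu³ + 2γv³ + ν` as in the
Jacobian lemma (`β, γ > 0`, `ν = O(u²v+uv²+(u+v)⁴)` near the origin, `ν`
continuous, `μ > 0` on `Σ* = [0,1]² \ {(0,0)}`), if every coefficient `P_{jk}` of
the polynomial `P` with weight `w(j,k) = j + k + min{j,k} ≤ r` vanishes, then for
every `p ∈ Π(r,ℓ)` (equivalently `r ≤ 3ℓ − 6/p < r + 1`) the function `μ^{−ℓ}P`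
lies in `L^p(Σ, μ)`. -/
theorem stmt19 (β γ : ℝ) (hβ : 0 < β) (hγ : 0 < γ) (ν μ : ℝ × ℝ → ℝ)
    (hνc : ContinuousOn ν (Icc (0:ℝ) 1 ×ˢ Icc (0:ℝ) 1))
    (hνO : ∃ C δ : ℝ, 0 < δ ∧ ∀ q ∈ Icc (0:ℝ) 1 ×ˢ Icc (0:ℝ) 1, ‖q‖ < δ →
      |ν q| ≤ C * (q.1 ^ 2 * q.2 + q.1 * q.2 ^ 2 + (q.1 + q.2) ^ 4))
    (hμ : ∀ q : ℝ × ℝ, μ q = 4 * q.1 * q.2 + 2 * β * q.1 ^ 3 + 2 * γ * q.2 ^ 3 + ν q)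
    (hpos : ∀ q ∈ (Icc (0:ℝ) 1 ×ˢ Icc (0:ℝ) 1) \ {((0:ℝ), (0:ℝ))}, 0 < μ q)
    (ℓ r D : ℕ) (P : ℕ → ℕ → ℝ)
    (hPdeg : ∀ j k, D < j + k → P j k = 0)
    (hP : ∀ j k, j + k + min j k ≤ r → P j k = 0)
    (p : ℝ) (hp : 1 ≤ p)
    (hpl : (r : ℝ) ≤ 3 * ℓ - 6 / p) (hpu : 3 * ℓ - 6 / p < r + 1) :
    (∫⁻ q in Icc (0:ℝ) 1 ×ˢ Icc (0:ℝ) 1,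
      ENNReal.ofReal
        (|(∑ j ∈ Finset.range (D + 1), ∑ k ∈ Finset.range (D + 1),
            P j k * q.1 ^ j * q.2 ^ k) / μ q ^ ℓ| ^ p * μ q)) < ⊤ :=
  stmt19_general β γ hβ hγ ν μ hνc hνO hμ hpos ℓ r D P hP p hp hpu
end
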